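/- arXiv:2306.12154 — 14 statements merged into one kernel-verified Lean document; each statement's English description precedes it below -/
import Mathlib

section
/- Let λ > 0, r > 0, x_R > 0, and set s = √(2(λ + r)). Define M : ℝ → ℝ by M(x) = exp(−x·s) + (r/(λ + r·exp(−x_R·s)))·(exp(−x_R·s) − exp(−(x + x_R)·s)). Then: (i) for all x, (1/2)·M''(x) − (λ + r)·M(x) + r·M(x_R) = 0; (ii) M(0) = 1; (iii) M(x) tends to a finite limit as x → +∞; and (iv) M(x_R) = (λ + r)·exp(−x_R·s) / (λ + r·exp(−x_R·s)). -/
open Real Set Filter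

/-! Writing `a = exp (-xR * s)` and `c = r / (λ + r a)`, the function is
`M x = (1 - c a) e^{-x s} + c a`, a constant plus a multiple of `e^{-x s}`. Since
`s² = 2(λ + r)`, the exponential part is annihilated by `½ ∂² - (λ + r)`, so the equation
reduces to the identity `(λ + r) c a = r M(x_R)`, and the limit at `+∞` is `c a`. -/

lemma exp_neg_mul_add_mul_sub_eq (s y c x : ℝ) :
    exp (-x * s) + c * (exp (-y * s) - exp (-(x + y) * s))
      = (1 - c * exp (-y * s)) * exp (-x * s) + c * exp (-y * s) := by
  rw [show -(x + y) * s = -x * s + -y * s by ring, exp_add]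
  ring

lemma hasDerivAt_const_mul_exp_neg_mul (A s x : ℝ) :
    HasDerivAt (fun x => A * exp (-x * s)) (-s * (A * exp (-x * s))) x :=
  ((((hasDerivAt_neg x).mul_const s).exp).const_mul A).congr_deriv (by ring)

lemma deriv_deriv_const_mul_exp_neg_mul_add_const (A B s x : ℝ) :
    deriv (deriv fun x => A * exp (-x * s) + B) x = s ^ 2 * (A * exp (-x * s)) := by
  have h₁ : deriv (fun x => A * exp (-x * s) + B) = fun x => -s * A * exp (-x * s) := by
    funext y
    rw [((hasDerivAt_const_mul_exp_neg_mul A s y).add_const B).deriv]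
    ring
  rw [h₁, (hasDerivAt_const_mul_exp_neg_mul (-s * A) s x).deriv]
  ring

lemma tendsto_const_mul_exp_neg_mul_add_const_atTop (A B : ℝ) {s : ℝ} (hs : 0 < s) :
    Tendsto (fun x => A * exp (-x * s) + B) atTop (nhds B) := by
  have h : Tendsto (fun x => exp (-x * s)) atTop (nhds 0) :=
    tendsto_exp_atBot.comp (by simpa [neg_mul] using tendsto_id.atTop_mul_const hs)
  simpa using (h.const_mul A).add_const B

theorem stmt_1_general (lam r xR s : ℝ) (hlam : 0 < lam) (hr : 0 < r)
    (hs : s = Real.sqrt (2 * (lam + r)))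
    (M : ℝ → ℝ)
    (hM : ∀ x, M x = Real.exp (-x * s)
      + (r / (lam + r * Real.exp (-xR * s)))
        * (Real.exp (-xR * s) - Real.exp (-(x + xR) * s))) :
    (∀ x : ℝ, (1/2) * deriv (deriv M) x - (lam + r) * M x + r * M xR = 0)
    ∧ M 0 = 1
    ∧ (∃ L : ℝ, Filter.Tendsto M Filter.atTop (nhds L))
    ∧ M xR = (lam + r) * Real.exp (-xR * s) / (lam + r * Real.exp (-xR * s)) := by
  set a := exp (-xR * s)
  set c := r / (lam + r * a)
  have hD : lam + r * a ≠ 0 := by positivity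
  have hMeq : M = fun x => (1 - c * a) * exp (-x * s) + c * a :=
    funext fun x => (hM x).trans (exp_neg_mul_add_mul_sub_eq s xR c x)
  have hMxR : M xR = (lam + r) * a / (lam + r * a) := by
    rw [hMeq]
    show (1 - c * a) * a + c * a = _
    simp only [c]
    field_simp
    ring
  have hs2 : s ^ 2 = 2 * (lam + r) := by
    rw [hs, sq_sqrt]
    positivity
  refine ⟨fun x => ?_, by simp [hM, a], ⟨c * a, ?_⟩, hMxR⟩
  · rw [hMxR, hMeq, deriv_deriv_const_mul_exp_neg_mul_add_const, hs2]
    simp only [c]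
    field_simp
    ring
  · rw [hMeq]
    exact tendsto_const_mul_exp_neg_mul_add_const_atTop _ _ (hs ▸ sqrt_pos.mpr (by positivity))

theorem stmt_1 (lam r xR s : ℝ) (hlam : 0 < lam) (hr : 0 < r) (hxR : 0 < xR)
    (hs : s = Real.sqrt (2 * (lam + r)))
    (M : ℝ → ℝ)
    (hM : ∀ x, M x = Real.exp (-x * s)
      + (r / (lam + r * Real.exp (-xR * s)))
        * (Real.exp (-xR * s) - Real.exp (-(x + xR) * s))) :
    (∀ x : ℝ, (1/2) * deriv (deriv M) x - (lam + r) * M x + r * M xR = 0)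
    ∧ M 0 = 1
    ∧ (∃ L : ℝ, Filter.Tendsto M Filter.atTop (nhds L))
    ∧ M xR = (lam + r) * Real.exp (-xR * s) / (lam + r * Real.exp (-xR * s)) :=
  stmt_1_general lam r xR s hlam hr hs M hM
end

section
/- Let r > 0 and x_R > 0. If T : ℝ → ℝ is twice continuously differentiable on [0, ∞), bounded on [0, ∞), satisfies T(0) = 0 and (1/2)·T''(x) − r·T(x) = −1 − r·T(x_R) for all x ≥ 0, then T(x) = (1/r)·exp(x_R·√(2r))·(1 − exp(−x·√(2r))) for all x ≥ 0; in particular T(x_R) = (exp(x_R·√(2r)) − 1)/r and T(x) → (1/r)·exp(x_R·√(2r)) as x → +∞. -/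
/-!
With `l = √(2r)` and `A = 1/r + T(x_R)`, the function `u = T - A` solves `u'' = l² u` on
`[0, ∞)`. Writing `u = p + q` with `p = (u' + l u)/(2l)` and `q = (l u - u')/(2l)` splits it
into the modes `p' = l p` and `q' = -l q`, so `p = p(0) eˡˣ` and `q = q(0) e⁻ˡˣ`; boundedness of `u`
kills the growing mode, hence `T = A (1 - e⁻ˡˣ)`. Evaluating at `x_R` then pins down
`A = e^{l x_R}/r`.
-/

open Real Set Filter

lemma eq_of_hasDerivWithinAt_zero_Ici {f : ℝ → ℝ} {a : ℝ}
    (hf : ∀ x ∈ Ici a, HasDerivWithinAt f 0 (Ici a) x) {x : ℝ} (hx : x ∈ Ici a) :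
    f x = f a :=
  constant_of_has_deriv_right_zero
    (fun y hy => ((hf y hy.1).continuousWithinAt).mono Icc_subset_Ici_self)
    (fun y hy => (hf y hy.1).mono (Ici_subset_Ici.mpr hy.1)) x ⟨hx, le_rfl⟩

lemma eq_mul_exp_of_hasDerivWithinAt_Ici {f : ℝ → ℝ} {c : ℝ}
    (hf : ∀ x ∈ Ici (0 : ℝ), HasDerivWithinAt f (c * f x) (Ici 0) x) {x : ℝ}
    (hx : 0 ≤ x) : f x = f 0 * exp (c * x) := by
  have hconst : ∀ y ∈ Ici (0 : ℝ),
      HasDerivWithinAt (fun y => exp (-(c * y)) * f y) 0 (Ici 0) y := by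
    intro y hy
    have hexp : HasDerivAt (fun y => exp (-(c * y))) (exp (-(c * y)) * -c) y := by
      simpa using ((hasDerivAt_id y).const_mul c).neg.exp
    exact (hexp.hasDerivWithinAt.mul (hf y hy)).congr_deriv (by ring)
  have h := eq_of_hasDerivWithinAt_zero_Ici hconst (mem_Ici.2 hx)
  simp only [mul_zero, neg_zero, exp_zero, one_mul] at h
  rw [← h, mul_right_comm, ← exp_add, neg_add_cancel, exp_zero, one_mul]

lemma eq_zero_of_abs_mul_exp_le {a l : ℝ} (hl : 0 < l)
    (h : ∃ C, ∀ x ∈ Ici (0 : ℝ), |a * exp (l * x)| ≤ C) : a = 0 := by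
  obtain ⟨C, hC⟩ := h
  by_contra ha
  have hgrow : Tendsto (fun x => |a| * exp (l * x)) atTop atTop :=
    (tendsto_exp_atTop.comp (tendsto_id.const_mul_atTop hl)).const_mul_atTop (abs_pos.2 ha)
  obtain ⟨x, hxC, hx0⟩ := ((hgrow.eventually_gt_atTop C).and (eventually_ge_atTop 0)).exists
  have := hC x hx0
  rw [abs_mul, abs_of_pos (exp_pos _)] at this
  linarith

theorem eq_mul_exp_neg_of_hasDerivWithinAt_of_bounded {f g : ℝ → ℝ} {l : ℝ} (hl : 0 < l)
    (hf : ∀ x ∈ Ici (0 : ℝ), HasDerivWithinAt f (g x) (Ici 0) x)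
    (hg : ∀ x ∈ Ici (0 : ℝ), HasDerivWithinAt g (l ^ 2 * f x) (Ici 0) x)
    (hbdd : ∃ C, ∀ x ∈ Ici (0 : ℝ), |f x| ≤ C) {x : ℝ} (hx : 0 ≤ x) :
    f x = f 0 * exp (-(l * x)) := by
  set p := fun y => (g y + l * f y) / (2 * l) with hp_def
  set q := fun y => (l * f y - g y) / (2 * l) with hq_def
  have hfpq : ∀ y, f y = p y + q y := fun y => by simp only [hp_def, hq_def]; field_simp; ring
  have hp : ∀ y, 0 ≤ y → p y = p 0 * exp (l * y) := fun y =>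
    eq_mul_exp_of_hasDerivWithinAt_Ici fun z hz => by
      refine (((hg z hz).add ((hf z hz).const_mul l)).div_const (2 * l)).congr_deriv ?_
      rw [hp_def]; field_simp; ring
  have hq : ∀ y, 0 ≤ y → q y = q 0 * exp (-l * y) := fun y =>
    eq_mul_exp_of_hasDerivWithinAt_Ici fun z hz => by
      refine ((((hf z hz).const_mul l).sub (hg z hz)).div_const (2 * l)).congr_deriv ?_
      rw [hq_def]; field_simp; ring
  have hp0 : p 0 = 0 := by
    obtain ⟨C, hC⟩ := hbdd
    refine eq_zero_of_abs_mul_exp_le hl ⟨C + |q 0|, fun y hy => ?_⟩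
    have hqy : |q y| ≤ |q 0| := by
      rw [hq y hy, abs_mul, abs_of_pos (exp_pos _)]
      exact mul_le_of_le_one_right (abs_nonneg _)
        (exp_le_one_iff.2 (by nlinarith [mem_Ici.1 hy]))
    rw [← hp y hy, show p y = f y - q y by rw [hfpq]; ring]
    exact (abs_sub _ _).trans (add_le_add (hC y hy) hqy)
  rw [hfpq x, hfpq 0, hp x hx, hq x hx, hp0]
  ring_nf

lemma ContDiffOn.hasDerivWithinAt_derivWithin_iteratedDerivWithin_two
    {𝕜 F : Type*} [NontriviallyNormedField 𝕜] [NormedAddCommGroup F] [NormedSpace 𝕜 F]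
    {f : 𝕜 → F} {s : Set 𝕜} (hf : ContDiffOn 𝕜 2 f s) (hs : UniqueDiffOn 𝕜 s) {x : 𝕜}
    (hx : x ∈ s) : HasDerivWithinAt (derivWithin f s) (iteratedDerivWithin 2 f s x) s x := by
  rw [show (2 : ℕ) = 1 + 1 from rfl, iteratedDerivWithin_succ', iteratedDerivWithin_one]
  exact ((hf.derivWithin hs (m := 1) (by norm_num)).differentiableOn one_ne_zero x
    hx).hasDerivWithinAt

theorem stmt_2 (r xR : ℝ) (hr : 0 < r) (hxR : 0 < xR) (T : ℝ → ℝ)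
    (hreg : ContDiffOn ℝ 2 T (Set.Ici 0))
    (hbdd : ∃ C, ∀ x ∈ Set.Ici (0:ℝ), |T x| ≤ C)
    (h0 : T 0 = 0)
    (hode : ∀ x ∈ Set.Ici (0:ℝ),
      (1/2) * iteratedDerivWithin 2 T (Set.Ici 0) x - r * T x = -1 - r * T xR) :
    (∀ x ∈ Set.Ici (0:ℝ),
      T x = (1/r) * Real.exp (xR * Real.sqrt (2*r)) * (1 - Real.exp (-x * Real.sqrt (2*r))))
    ∧ T xR = (Real.exp (xR * Real.sqrt (2*r)) - 1) / r
    ∧ Filter.Tendsto T Filter.atTop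
        (nhds ((1/r) * Real.exp (xR * Real.sqrt (2*r)))) := by
  set l := √(2 * r)
  have hl : 0 < l := sqrt_pos.2 (by positivity)
  have hl2 : l ^ 2 = 2 * r := sq_sqrt (by positivity)
  obtain ⟨A, hrA⟩ : ∃ A, r * A = 1 + r * T xR := ⟨1 / r + T xR, by field_simp⟩
  have hsol : ∀ x ∈ Ici (0 : ℝ), T x = A * (1 - exp (-(l * x))) := by
    intro x hx
    obtain ⟨C, hC⟩ := hbdd
    have h := eq_mul_exp_neg_of_hasDerivWithinAt_of_bounded (f := fun y => T y - A) hl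
      (fun y hy => (hreg.differentiableOn two_ne_zero y hy).hasDerivWithinAt.sub_const A)
      (fun y hy => (hreg.hasDerivWithinAt_derivWithin_iteratedDerivWithin_two
        (uniqueDiffOn_Ici 0) hy).congr_deriv (by
          rw [hl2]; linear_combination 2 * hode y hy + 2 * hrA))
      ⟨C + |A|, fun y hy => (abs_sub _ _).trans (add_le_add_left (hC y hy) _)⟩ hx
    rw [h0] at h
    linear_combination h
  have hA : A = exp (xR * l) / r := by
    have hexp : exp (-(l * xR)) * exp (xR * l) = 1 := by rw [← exp_add]; ring_nf; exact exp_zero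
    refine eq_div_of_mul_eq hr.ne' ?_
    linear_combination (-A * r) * hexp + exp (xR * l) * (r * hsol xR hxR.le + hrA)
  refine ⟨fun x hx => ?_, ?_, ?_⟩
  · rw [hsol x hx, hA]; ring_nf
  · rw [hA, mul_div_cancel₀ _ hr.ne'] at hrA
    rw [eq_div_iff hr.ne']
    linarith
  · have hdecay : Tendsto (fun x => exp (-(l * x))) atTop (nhds 0) :=
      tendsto_exp_neg_atTop_nhds_zero.comp (tendsto_id.const_mul_atTop hl)
    have hlim : Tendsto T atTop (nhds (A * (1 - 0))) :=
      ((hdecay.const_sub 1).const_mul A).congr' <| by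
        filter_upwards [eventually_ge_atTop 0] with x hx using (hsol x hx).symm
    convert hlim using 2
    rw [hA]; ring
end

section
/- Let r > 0, x_R > 0, s = √(2r), and let T₁(x) = (1/r)·e^{x_R·s}·(1 − e^{−x·s}). Define T₂ : ℝ → ℝ by T₂(x) = e^{x_R·s}·((2/r²)·e^{x_R·s} − 2/r² − 2x_R/(r·s))·(1 − e^{−x·s}) − (2/r)·e^{(x_R − x)·s}·(1/r + x/s) + (2/r²)·e^{x_R·s}. Then: (i) for all x ≥ 0, (1/2)·T₂''(x) − r·T₂(x) = −2·T₁(x) − r·T₂(x_R); (ii) T₂(0) = 0; (iii) T₂ is bounded on [0, ∞); and (iv) T₂(x_R) = e^{x_R·s}·((2/r²)·e^{x_R·s} − 2/r² − 2x_R/(r·s)). -/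
open Real Set Filter

/-! Every term of `T₂` lies in the span of `1`, `e^{-sx}` and `x e^{-sx}`, a family closed under
differentiation. On it, `s² = 2r` makes `(1/2) f'' - r f` collapse to `-r α - s γ e^{-sx}`, and
`x e^{-sx} ≤ 1/s` gives boundedness on `[0, ∞)`. -/

noncomputable def linExpNeg (α β γ s : ℝ) (x : ℝ) : ℝ := α + (β + γ * x) * Real.exp (-x * s)

theorem hasDerivAt_linExpNeg (α β γ s x : ℝ) :
    HasDerivAt (linExpNeg α β γ s) (linExpNeg 0 (γ - s * β) (-(s * γ)) s x) x := by
  have hlin : HasDerivAt (fun x => β + γ * x) γ x := by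
    simpa using ((hasDerivAt_id x).const_mul γ).const_add β
  have hexp : HasDerivAt (fun x => Real.exp (-x * s)) (Real.exp (-x * s) * (-1 * s)) x :=
    ((hasDerivAt_id x).neg.mul_const s).exp
  refine ((hlin.mul hexp).const_add α).congr_deriv ?_
  rw [linExpNeg]
  ring

theorem deriv_linExpNeg (α β γ s : ℝ) :
    deriv (linExpNeg α β γ s) = linExpNeg 0 (γ - s * β) (-(s * γ)) s :=
  funext fun x => (hasDerivAt_linExpNeg α β γ s x).deriv

theorem half_deriv_deriv_sub_linExpNeg {r s : ℝ} (hs : s ^ 2 = 2 * r) (α β γ x : ℝ) :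
    (1 / 2) * deriv (deriv (linExpNeg α β γ s)) x - r * linExpNeg α β γ s x
      = -(r * α) - s * γ * Real.exp (-x * s) := by
  rw [deriv_linExpNeg, deriv_linExpNeg]
  simp only [linExpNeg]
  linear_combination (1 / 2) * (β + γ * x) * Real.exp (-x * s) * hs

theorem mul_exp_neg_mul_le {s : ℝ} (hs : 0 < s) (x : ℝ) : x * Real.exp (-x * s) ≤ 1 / s := by
  rw [le_div_iff₀ hs, mul_right_comm, neg_mul, Real.exp_neg, ← div_eq_mul_inv,
    div_le_one (Real.exp_pos _)]
  linarith [Real.add_one_le_exp (x * s)]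

theorem abs_linExpNeg_le {s : ℝ} (hs : 0 < s) (α β γ : ℝ) {x : ℝ} (hx : 0 ≤ x) :
    |linExpNeg α β γ s x| ≤ |α| + |β| + |γ| / s := by
  have he₀ : 0 < Real.exp (-x * s) := Real.exp_pos _
  have he₁ : Real.exp (-x * s) ≤ 1 := Real.exp_le_one_iff.mpr (by nlinarith)
  have hxe : |x * Real.exp (-x * s)| ≤ 1 / s := by
    rw [abs_of_nonneg (by positivity)]
    exact mul_exp_neg_mul_le hs x
  calc |linExpNeg α β γ s x|
      = |α + β * Real.exp (-x * s) + γ * (x * Real.exp (-x * s))| := by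
        rw [linExpNeg]; ring_nf
    _ ≤ |α| + |β * Real.exp (-x * s)| + |γ * (x * Real.exp (-x * s))| :=
        (abs_add_le _ _).trans (add_le_add_left (abs_add_le _ _) _)
    _ ≤ |α| + |β| * 1 + |γ| * (1 / s) := by
        rw [abs_mul, abs_mul, abs_of_pos he₀]
        gcongr
    _ = |α| + |β| + |γ| / s := by ring

theorem stmt_3_general (r xR s : ℝ) (hr : 0 < r) (hs : s = Real.sqrt (2*r))
    (T₁ T₂ : ℝ → ℝ)
    (hT1 : ∀ x, T₁ x = (1/r) * Real.exp (xR*s) * (1 - Real.exp (-x*s)))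
    (hT2 : ∀ x, T₂ x =
      Real.exp (xR*s) * ((2/r^2) * Real.exp (xR*s) - 2/r^2 - 2*xR/(r*s))
        * (1 - Real.exp (-x*s))
      - (2/r) * Real.exp ((xR - x)*s) * (1/r + x/s)
      + (2/r^2) * Real.exp (xR*s)) :
    (∀ x : ℝ, 0 ≤ x →
      (1/2) * deriv (deriv T₂) x - r * T₂ x = -2 * T₁ x - r * T₂ xR)
    ∧ T₂ 0 = 0
    ∧ (∃ C, ∀ x ∈ Set.Ici (0:ℝ), |T₂ x| ≤ C)
    ∧ T₂ xR = Real.exp (xR*s) * ((2/r^2) * Real.exp (xR*s) - 2/r^2 - 2*xR/(r*s)) := by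
  have hs₀ : 0 < s := hs ▸ Real.sqrt_pos.mpr (by linarith)
  have hs₂ : s ^ 2 = 2 * r := hs ▸ Real.sq_sqrt (by linarith)
  set E := Real.exp (xR * s)
  set A := E * ((2/r^2) * E - 2/r^2 - 2*xR/(r*s)) with hA
  have hshift : ∀ x, Real.exp ((xR - x) * s) = E * Real.exp (-x * s) := fun x => by
    rw [← Real.exp_add]; ring_nf
  have hT2lin : T₂ = linExpNeg (A + 2 * E / r^2) (-A - 2 * E / r^2) (-(2 * E / (r * s))) s := by
    funext x
    rw [hT2, hshift, linExpNeg]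
    field_simp
    ring
  have hT2xR : T₂ xR = A := by
    have hE : E ≠ 0 := (Real.exp_pos _).ne'
    have hEinv : Real.exp (-xR * s) = E⁻¹ := by rw [← Real.exp_neg, neg_mul]
    rw [hT2, sub_self, zero_mul, Real.exp_zero, hEinv, hA]
    field_simp
    ring
  refine ⟨fun x _ => ?_, ?_, ⟨_, fun x hx => hT2lin ▸ abs_linExpNeg_le hs₀ _ _ _ hx⟩, hT2xR⟩
  · rw [hT2xR, hT1, hT2lin, half_deriv_deriv_sub_linExpNeg hs₂]
    field_simp
    ring
  · rw [hT2 0]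
    simp only [neg_zero, zero_mul, Real.exp_zero, sub_zero, sub_self, zero_div, add_zero]
    ring

theorem stmt_3 (r xR s : ℝ) (hr : 0 < r) (hxR : 0 < xR) (hs : s = Real.sqrt (2*r))
    (T₁ T₂ : ℝ → ℝ)
    (hT1 : ∀ x, T₁ x = (1/r) * Real.exp (xR*s) * (1 - Real.exp (-x*s)))
    (hT2 : ∀ x, T₂ x =
      Real.exp (xR*s) * ((2/r^2) * Real.exp (xR*s) - 2/r^2 - 2*xR/(r*s))
        * (1 - Real.exp (-x*s))
      - (2/r) * Real.exp ((xR - x)*s) * (1/r + x/s)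
      + (2/r^2) * Real.exp (xR*s)) :
    (∀ x : ℝ, 0 ≤ x →
      (1/2) * deriv (deriv T₂) x - r * T₂ x = -2 * T₁ x - r * T₂ xR)
    ∧ T₂ 0 = 0
    ∧ (∃ C, ∀ x ∈ Set.Ici (0:ℝ), |T₂ x| ≤ C)
    ∧ T₂ xR = Real.exp (xR*s) * ((2/r^2) * Real.exp (xR*s) - 2/r^2 - 2*xR/(r*s)) :=
  stmt_3_general r xR s hr hs T₁ T₂ hT1 hT2
end

section
/- Let r > 0, x_R > 0, s = √(2r), and define V(x) = T₂(x) − T₁(x)², where T₁(x) = (1/r)·e^{x_R·s}·(1 − e^{−x·s}) and T₂(x) = e^{x_R·s}·((2/r²)e^{x_R·s} − 2/r² − 2x_R/(r·s))·(1 − e^{−x·s}) − (2/r)·e^{(x_R − x)·s}·(1/r + x/s) + (2/r²)·e^{x_R·s}. Set β = e^{x_R·s}·((2/r²)e^{x_R·s} − 2/r² − 2x_R/(r·s)), a₂ = s·β + (√2/(r·√r))·e^{x_R·s}, and a₄ = β + (2/r²)·e^{x_R·s} − (1/r²)·e^{2x_R·s}. Then (V(x) − a₂·x)/x → 0 as x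 → 0⁺, and V(x) → a₄ as x → +∞. -/
open Real Set Filter Topology

/-! Writing `E = exp (xR * s)`, `V` is a polynomial in `x`, `exp (-s * x)` and `x * exp (-s * x)`.
Since `V 0 = 0`, the first limit says exactly that `V' 0 = a₂`, which the chain rule gives
once `s² = 2 r` turns `√2 / (r √r)` into `2 / (r s)`. At infinity `exp (-s * x)` and
`x * exp (-s * x)` vanish, leaving `a₄`. -/

theorem HasDerivAt.tendsto_sub_mul_div_nhds_zero {f : ℝ → ℝ} {a : ℝ} (hf : HasDerivAt f a 0)
    (h0 : f 0 = 0) : Tendsto (fun x => (f x - a * x) / x) (𝓝 0) (𝓝 0) := by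
  simpa [h0, mul_comm] using (hasDerivAt_iff_isLittleO.mp hf).tendsto_div_nhds_zero

theorem tendsto_mul_exp_neg_mul_atTop {b : ℝ} (hb : 0 < b) :
    Tendsto (fun x => x * exp (-b * x)) atTop (𝓝 0) := by
  simpa using tendsto_rpow_mul_exp_neg_mul_atTop_nhds_zero 1 b hb

/-- `V` with `E` standing for `exp (xR * s)` and `β` for its coefficient in `T₂`; the factor
`exp ((xR - x) * s)` of `T₂` becomes `E * exp (-s * x)`. -/
noncomputable def resettingVariance (r s β E x : ℝ) : ℝ :=
  β * (1 - exp (-s * x)) - 2 / r * E * exp (-s * x) * (1 / r + x / s) + 2 / r ^ 2 * E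
    - (E / r) ^ 2 * (1 - exp (-s * x)) ^ 2

section
variable (r s β E : ℝ)

theorem resettingVariance_zero : resettingVariance r s β E 0 = 0 := by
  simp only [resettingVariance, mul_zero, exp_zero, sub_self, mul_one, one_div, zero_div,
    add_zero, zero_sub, ne_eq, OfNat.ofNat_ne_zero, not_false_eq_true, zero_pow, sub_zero]
  ring

theorem hasDerivAt_resettingVariance_zero (hr : r ≠ 0) (hs : s ≠ 0) :
    HasDerivAt (resettingVariance r s β E) (β * s + 2 * E * (s ^ 2 - r) / (r ^ 2 * s)) 0 := by
  have hu : HasDerivAt (fun x => exp (-s * x)) (-s) 0 := by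
    simpa using ((hasDerivAt_id (0 : ℝ)).const_mul (-s)).exp
  have hv : HasDerivAt (fun x => 1 - exp (-s * x)) s 0 := by
    simpa using hu.const_sub 1
  have hlin : HasDerivAt (fun x : ℝ => 1 / r + x / s) (1 / s) 0 :=
    ((hasDerivAt_id 0).div_const s).const_add (1 / r)
  have h := (((hv.const_mul β).sub ((hu.const_mul (2 / r * E)).mul hlin)).add_const
    (2 / r ^ 2 * E)).sub ((hv.pow 2).const_mul ((E / r) ^ 2))
  refine (h.congr_of_eventuallyEq (.of_forall fun x => rfl)).congr_deriv ?_
  field_simp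
  simp only [mul_zero, add_zero, neg_zero, exp_zero, mul_one, Nat.cast_ofNat, sub_self,
    Nat.add_one_sub_one, pow_one, sub_zero]
  ring

theorem tendsto_resettingVariance_atTop (hs : 0 < s) :
    Tendsto (resettingVariance r s β E) atTop (𝓝 (β + 2 / r ^ 2 * E - (E / r) ^ 2)) := by
  have hu : Tendsto (fun x => exp (-s * x)) atTop (𝓝 0) := by
    simpa using tendsto_rpow_mul_exp_neg_mul_atTop_nhds_zero 0 s hs
  have hv : Tendsto (fun x => 1 - exp (-s * x)) atTop (𝓝 1) := by
    simpa using hu.const_sub 1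
  have h := (((hv.const_mul β).sub (hu.const_mul (2 / r ^ 2 * E))).sub
    ((tendsto_mul_exp_neg_mul_atTop hs).const_mul (2 / (r * s) * E))).add_const (2 / r ^ 2 * E)
    |>.sub ((hv.pow 2).const_mul ((E / r) ^ 2))
  convert h using 2
  · simp only [resettingVariance]
    ring
  · simp

end

theorem stmt_6_general (r xR s β a₂ a₄ : ℝ) (hr : 0 < r)
    (hs : s = Real.sqrt (2*r))
    (T₁ T₂ V : ℝ → ℝ)
    (hT1 : ∀ x, T₁ x = (1/r) * Real.exp (xR*s) * (1 - Real.exp (-x*s)))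
    (hT2 : ∀ x, T₂ x =
      Real.exp (xR*s) * ((2/r^2) * Real.exp (xR*s) - 2/r^2 - 2*xR/(r*s))
        * (1 - Real.exp (-x*s))
      - (2/r) * Real.exp ((xR - x)*s) * (1/r + x/s)
      + (2/r^2) * Real.exp (xR*s))
    (hV : ∀ x, V x = T₂ x - (T₁ x)^2)
    (hβ : β = Real.exp (xR*s) * ((2/r^2) * Real.exp (xR*s) - 2/r^2 - 2*xR/(r*s)))
    (ha2 : a₂ = s * β + (Real.sqrt 2 / (r * Real.sqrt r)) * Real.exp (xR*s))
    (ha4 : a₄ = β + (2/r^2) * Real.exp (xR*s) - (1/r^2) * Real.exp (2*xR*s)) :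
    Filter.Tendsto (fun x => (V x - a₂ * x) / x) (nhdsWithin 0 (Set.Ioi 0)) (nhds 0)
    ∧ Filter.Tendsto V Filter.atTop (nhds a₄) := by
  have hs0 : 0 < s := hs ▸ sqrt_pos.mpr (by positivity)
  have hVeq : V = resettingVariance r s β (exp (xR * s)) := by
    funext x
    rw [hV, hT1, hT2, ← hβ, resettingVariance, show -x * s = -s * x by ring,
      show (xR - x) * s = xR * s + -s * x by ring, exp_add]
    ring
  have ha2' : a₂ = β * s + 2 * exp (xR * s) * (s ^ 2 - r) / (r ^ 2 * s) := by
    have h2 : √2 ^ 2 = 2 := sq_sqrt (by norm_num)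
    have hr' : √r ^ 2 = r := sq_sqrt hr.le
    rw [ha2, hs, sqrt_mul (by norm_num)]
    field_simp
    rw [h2, hr']
    ring
  have ha4' : a₄ = β + 2 / r ^ 2 * exp (xR * s) - (exp (xR * s) / r) ^ 2 := by
    rw [ha4, mul_assoc, two_mul, exp_add]
    ring
  rw [hVeq, ha2', ha4']
  exact ⟨((hasDerivAt_resettingVariance_zero r s β _ hr.ne' hs0.ne').tendsto_sub_mul_div_nhds_zero
    (resettingVariance_zero r s β _)).mono_left nhdsWithin_le_nhds,
    tendsto_resettingVariance_atTop r s β _ hs0⟩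

theorem stmt_6 (r xR s β a₂ a₄ : ℝ) (hr : 0 < r) (hxR : 0 < xR)
    (hs : s = Real.sqrt (2*r))
    (T₁ T₂ V : ℝ → ℝ)
    (hT1 : ∀ x, T₁ x = (1/r) * Real.exp (xR*s) * (1 - Real.exp (-x*s)))
    (hT2 : ∀ x, T₂ x =
      Real.exp (xR*s) * ((2/r^2) * Real.exp (xR*s) - 2/r^2 - 2*xR/(r*s))
        * (1 - Real.exp (-x*s))
      - (2/r) * Real.exp ((xR - x)*s) * (1/r + x/s)
      + (2/r^2) * Real.exp (xR*s))
    (hV : ∀ x, V x = T₂ x - (T₁ x)^2)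
    (hβ : β = Real.exp (xR*s) * ((2/r^2) * Real.exp (xR*s) - 2/r^2 - 2*xR/(r*s)))
    (ha2 : a₂ = s * β + (Real.sqrt 2 / (r * Real.sqrt r)) * Real.exp (xR*s))
    (ha4 : a₄ = β + (2/r^2) * Real.exp (xR*s) - (1/r^2) * Real.exp (2*xR*s)) :
    Filter.Tendsto (fun x => (V x - a₂ * x) / x) (nhdsWithin 0 (Set.Ioi 0)) (nhds 0)
    ∧ Filter.Tendsto V Filter.atTop (nhds a₄) :=
  stmt_6_general r xR s β a₂ a₄ hr hs T₁ T₂ V hT1 hT2 hV hβ ha2 ha4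
end

section
/- Let r > 0, x_R > 0, s = √(2r), and α₁ = (x_R/r)·e^{x_R·s}. If T : ℝ → ℝ is twice continuously differentiable, satisfies (1/2)·T''(x) − r·T(x) = −x − r·α₁ for all x ≥ 0, T(0) = 0 and T(x_R) = α₁, then T(x) = (x_R/r)·e^{x_R·s}·(1 − e^{−x·s}) + x/r for all x ≥ 0. -/
/-! Writing `g x = α₁ (1 - e^{-s x}) + x / r` for the claimed solution, `g` solves the same
equation (using `s² = 2 r`), so `D = T - g` satisfies `D'' = s² D` on `[0, ∞)` with
`D 0 = D x_R = 0`. The combinations `D' ± s D` then solve first-order linear equations, which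
forces `s D = D'(0) sinh (s x)`; since `sinh (s x_R) ≠ 0`, `D'(0) = 0` and `D` vanishes. -/

open Real Set Filter

theorem eq_mul_exp_of_hasDerivAt_const_mul {u : ℝ → ℝ} {c a : ℝ}
    (hu : ∀ x, a ≤ x → HasDerivAt u (c * u x) x) :
    ∀ x, a ≤ x → u x = u a * exp (c * (x - a)) := by
  set v : ℝ → ℝ := fun x => u x * exp (-(c * (x - a)))
  have hv : ∀ x, a ≤ x → HasDerivAt v 0 x := by
    intro x hx
    have he : HasDerivAt (fun y => exp (-(c * (y - a)))) (exp (-(c * (x - a))) * -(c * 1)) x :=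
      (((hasDerivAt_id x).sub_const a).const_mul c).neg.exp
    exact ((hu x hx).mul he).congr_deriv (by ring)
  intro x hx
  have hvx : v x = v a :=
    constant_of_has_deriv_right_zero
      (fun y hy => (hv y hy.1).continuousAt.continuousWithinAt)
      (fun y hy => (hv y hy.1).hasDerivWithinAt) x ⟨hx, le_rfl⟩
  have hexp : exp (-(c * (x - a))) * exp (c * (x - a)) = 1 := by
    rw [← exp_add, neg_add_cancel, exp_zero]
  simp only [v, sub_self, mul_zero, neg_zero, exp_zero, mul_one] at hvx
  linear_combination exp (c * (x - a)) * hvx - u x * hexp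

theorem mul_eq_mul_sinh_of_hasDerivAt_sq_mul {D D' : ℝ → ℝ} {s : ℝ}
    (hD : ∀ x, 0 ≤ x → HasDerivAt D (D' x) x)
    (hD' : ∀ x, 0 ≤ x → HasDerivAt D' (s ^ 2 * D x) x) (h0 : D 0 = 0) :
    ∀ x, 0 ≤ x → s * D x = D' 0 * sinh (s * x) := by
  intro x hx
  have hplus := eq_mul_exp_of_hasDerivAt_const_mul (u := fun y => D' y + s * D y) (c := s)
    (fun y hy => ((hD' y hy).add ((hD y hy).const_mul s)).congr_deriv (by ring)) x hx
  have hminus := eq_mul_exp_of_hasDerivAt_const_mul (u := fun y => D' y - s * D y) (c := -s)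
    (fun y hy => ((hD' y hy).sub ((hD y hy).const_mul s)).congr_deriv (by ring)) x hx
  simp only [h0, mul_zero, add_zero, sub_zero] at hplus hminus
  rw [sinh_eq, neg_mul_eq_neg_mul]
  linear_combination (hplus - hminus) / 2

theorem eq_zero_of_hasDerivAt_sq_mul_of_eq_zero {D D' : ℝ → ℝ} {s b : ℝ}
    (hD : ∀ x, 0 ≤ x → HasDerivAt D (D' x) x)
    (hD' : ∀ x, 0 ≤ x → HasDerivAt D' (s ^ 2 * D x) x) (hs : s ≠ 0) (hb : 0 < b)
    (h0 : D 0 = 0) (hDb : D b = 0) :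
    ∀ x, 0 ≤ x → D x = 0 := by
  have hsinh := mul_eq_mul_sinh_of_hasDerivAt_sq_mul hD hD' h0
  have hD'0 : D' 0 = 0 := by
    have := hsinh b hb.le
    rw [hDb, mul_zero, eq_comm] at this
    exact (mul_eq_zero.mp this).resolve_right (sinh_ne_zero.mpr (mul_ne_zero hs hb.ne'))
  intro x hx
  have := hsinh x hx
  rw [hD'0, zero_mul] at this
  exact (mul_eq_zero.mp this).resolve_left hs

theorem stmt_7 (r xR s α₁ : ℝ) (hr : 0 < r) (hxR : 0 < xR)
    (hs : s = Real.sqrt (2*r)) (hα : α₁ = (xR/r) * Real.exp (xR*s))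
    (T : ℝ → ℝ) (hreg : ContDiff ℝ 2 T)
    (hode : ∀ x : ℝ, 0 ≤ x → (1/2) * deriv (deriv T) x - r * T x = -x - r * α₁)
    (h0 : T 0 = 0) (hxReq : T xR = α₁) :
    ∀ x : ℝ, 0 ≤ x →
      T x = (xR/r) * Real.exp (xR*s) * (1 - Real.exp (-x*s)) + x/r := by
  have hs0 : 0 < s := hs ▸ sqrt_pos.mpr (by positivity)
  have hs2 : s ^ 2 = 2 * r := hs ▸ sq_sqrt (by positivity)
  set g : ℝ → ℝ := fun x => α₁ * (1 - exp (-x * s)) + x / r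
  have hg : ∀ x, HasDerivAt g (α₁ * s * exp (-x * s) + 1 / r) x := fun x =>
    ((((hasDerivAt_neg x).mul_const s).exp.const_sub 1).const_mul α₁).add
      ((hasDerivAt_id x).div_const r) |>.congr_deriv (by ring)
  have hg' : ∀ x, HasDerivAt (fun x => α₁ * s * exp (-x * s) + 1 / r)
      (-(α₁ * s ^ 2 * exp (-x * s))) x := fun x =>
    (((hasDerivAt_neg x).mul_const s).exp.const_mul (α₁ * s)).add_const (1 / r)
      |>.congr_deriv (by ring)
  have hgxR : g xR = α₁ := by
    simp only [g, hα, neg_mul, mul_sub, mul_one]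
    rw [mul_assoc, ← exp_add]
    simp
  have hT := hreg.differentiable two_ne_zero
  have hT' := hreg.differentiable_deriv_two
  have hDeq := eq_zero_of_hasDerivAt_sq_mul_of_eq_zero (D := fun x => T x - g x)
    (fun x _ => (hT x).hasDerivAt.sub (hg x))
    (fun x hx => ((hT' x).hasDerivAt.sub (hg' x)).congr_deriv (by
      simp only [g, hs2]
      linear_combination 2 * hode x hx + 2 * mul_div_cancel₀ x hr.ne'))
    hs0.ne' hxR (by simp [g, h0]) (sub_eq_zero.mpr (hxReq.trans hgxR.symm))
  intro x hx
  rw [← hα]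
  linear_combination hDeq x hx
end

section
/- Let r > 0, x_R > 0, s = √(2r), α₂ = (2·e^{x_R·s}/r)·((x_R²/r)·(3/4 + e^{x_R·s}) + 1/r² − x_R³/(2s)) − 2/r³, and A₁(x) = (x_R/r)·e^{x_R·s}·(1 − e^{−x·s}) + x/r. Define T(x) = (1 − e^{−x·s})·(α₂ + 2/r³) + (2x/r²)·(x + x_R·e^{x_R·s}) − (x_R·x/r)·(x/s + 1/(2r))·e^{−(x − x_R)·s}. Then: (i) for all x ≥ 0, (1/2)·T''(x) − r·T(x) = −2x·A₁(x) − r·α₂; (ii) T(0) = 0; and (iii) T(x_R) = α₂. -/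
open Real Set Filter

/-!
With `K = e^{x_R s}` and `e^{-(x - x_R)s} = K e^{-sx}`, `T` has the form `P(x) + Q(x) e^{-sx}` with
`P`, `Q` quadratic, so `T''` is again of this form with explicit coefficients. Because `s² = 2r`, the
operator `½ D² - r` sends `Q e^{-sx}` to `(½ Q'' - s Q') e^{-sx}`, and the ODE reduces to comparing
polynomial coefficients. The boundary values are direct evaluations; `α₂` is exactly the value
making `T(x_R) = α₂`.
-/

theorem hasDerivAt_mul_exp_const_mul {p : ℝ → ℝ} {p' : ℝ} (k : ℝ) {x : ℝ}
    (hp : HasDerivAt p p' x) :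
    HasDerivAt (fun y => p y * exp (k * y)) ((p' + k * p x) * exp (k * x)) x := by
  have hexp : HasDerivAt (fun y => exp (k * y)) (exp (k * x) * k) x := by
    simpa using ((hasDerivAt_id x).const_mul k).exp
  exact (hp.mul hexp).congr_deriv (by ring)

theorem hasDerivAt_quadratic (a b c x : ℝ) :
    HasDerivAt (fun y => a * y ^ 2 + b * y + c) (2 * a * x + b) x := by
  have h := (((hasDerivAt_pow 2 x).const_mul a).add ((hasDerivAt_id x).const_mul b)).add_const c
  exact h.congr_deriv (by simp; ring)

theorem deriv_quadratic_add_quadratic_mul_exp (a b c a' b' c' k : ℝ) :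
    deriv (fun y => a * y ^ 2 + b * y + c + (a' * y ^ 2 + b' * y + c') * exp (k * y))
      = fun y => 2 * a * y + b
          + (k * a' * y ^ 2 + (2 * a' + k * b') * y + (b' + k * c')) * exp (k * y) := by
  funext x
  refine ((hasDerivAt_quadratic a b c x).add
    (hasDerivAt_mul_exp_const_mul k (hasDerivAt_quadratic a' b' c' x))).deriv.trans ?_
  ring

theorem deriv_deriv_quadratic_add_quadratic_mul_exp (a b c a' b' c' k x : ℝ) :
    deriv (deriv fun y => a * y ^ 2 + b * y + c + (a' * y ^ 2 + b' * y + c') * exp (k * y)) x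
      = 2 * a + (k ^ 2 * a' * x ^ 2 + (4 * k * a' + k ^ 2 * b') * x
          + (2 * a' + 2 * k * b' + k ^ 2 * c')) * exp (k * x) := by
  rw [deriv_quadratic_add_quadratic_mul_exp]
  refine ((hasDerivAt_id x |>.const_mul (2 * a) |>.add_const b).add
    (hasDerivAt_mul_exp_const_mul k
      (hasDerivAt_quadratic (k * a') (2 * a' + k * b') (b' + k * c') x))).deriv.trans ?_
  ring

theorem stmt_9_general (r xR s α₂ : ℝ) (hr : 0 < r)
    (hs : s = Real.sqrt (2*r))
    (hα2 : α₂ = (2 * Real.exp (xR*s) / r)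
      * ((xR^2/r) * (3/4 + Real.exp (xR*s)) + 1/r^2 - xR^3/(2*s)) - 2/r^3)
    (A₁ T : ℝ → ℝ)
    (hA : ∀ x, A₁ x = (xR/r) * Real.exp (xR*s) * (1 - Real.exp (-x*s)) + x/r)
    (hT : ∀ x, T x = (1 - Real.exp (-x*s)) * (α₂ + 2/r^3)
      + (2*x/r^2) * (x + xR * Real.exp (xR*s))
      - (xR*x/r) * (x/s + 1/(2*r)) * Real.exp (-(x - xR)*s)) :
    (∀ x : ℝ, 0 ≤ x →
      (1/2) * deriv (deriv T) x - r * T x = -2*x * A₁ x - r * α₂)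
    ∧ T 0 = 0
    ∧ T xR = α₂ := by
  have hs0 : 0 < s := hs ▸ sqrt_pos.mpr (by linarith)
  have hs2 : s ^ 2 = 2 * r := hs ▸ sq_sqrt (by linarith)
  set K := exp (xR * s)
  have hK : K ≠ 0 := exp_ne_zero _
  have hshift (x : ℝ) : exp (-(x - xR) * s) = K * exp (-s * x) := by
    rw [← exp_add]; ring_nf
  have hTquad : T = fun y => 2 / r ^ 2 * y ^ 2 + 2 * xR * K / r ^ 2 * y + (α₂ + 2 / r ^ 3)
      + (-(xR * K / (r * s)) * y ^ 2 + -(xR * K / (2 * r ^ 2)) * y + -(α₂ + 2 / r ^ 3))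
        * exp (-s * y) := by
    funext y
    rw [hT, hshift, neg_mul]
    field_simp
    ring
  refine ⟨fun x _ => ?_, ?_, ?_⟩
  · rw [hTquad, deriv_deriv_quadratic_add_quadratic_mul_exp, hA, neg_mul x s]
    obtain rfl : r = s ^ 2 / 2 := by linarith
    field_simp
    ring
  · simp [hT]
  · have hKinv : exp (-xR * s) = K⁻¹ := by rw [neg_mul, exp_neg]
    rw [hT, hKinv, sub_self, neg_zero, zero_mul, exp_zero, hα2]
    obtain rfl : r = s ^ 2 / 2 := by linarith
    field_simp
    ring

theorem stmt_9 (r xR s α₂ : ℝ) (hr : 0 < r) (hxR : 0 < xR)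
    (hs : s = Real.sqrt (2*r))
    (hα2 : α₂ = (2 * Real.exp (xR*s) / r)
      * ((xR^2/r) * (3/4 + Real.exp (xR*s)) + 1/r^2 - xR^3/(2*s)) - 2/r^3)
    (A₁ T : ℝ → ℝ)
    (hA : ∀ x, A₁ x = (xR/r) * Real.exp (xR*s) * (1 - Real.exp (-x*s)) + x/r)
    (hT : ∀ x, T x = (1 - Real.exp (-x*s)) * (α₂ + 2/r^3)
      + (2*x/r^2) * (x + xR * Real.exp (xR*s))
      - (xR*x/r) * (x/s + 1/(2*r)) * Real.exp (-(x - xR)*s)) :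
    (∀ x : ℝ, 0 ≤ x →
      (1/2) * deriv (deriv T) x - r * T x = -2*x * A₁ x - r * α₂)
    ∧ T 0 = 0
    ∧ T xR = α₂ :=
  stmt_9_general r xR s α₂ hr hs hα2 A₁ T hA hT
end

section
/- Let r > 0, x_R > 0, s = √(2r), α₂ = (2·e^{x_R·s}/r)·((x_R²/r)·(3/4 + e^{x_R·s}) + 1/r² − x_R³/(2s)) − 2/r³, A₁(x) = (x_R/r)·e^{x_R·s}·(1 − e^{−x·s}) + x/r, and T(x) = (1 − e^{−x·s})·(α₂ + 2/r³) + (2x/r²)·(x + x_R·e^{x_R·s}) − (x_R·x/r)·(x/s + 1/(2r))·e^{−(x − x_R)·s}. Then T(x)/x² → 2/r² and (T(x) − A₁(x)²)/x² → 1/r² as x → +∞; moreover (T(x) − c·x)/x → 0 as x → 0⁺, where c = s·(α₂ + 2/r³) + (3x_R/(2r²))·e^{x_R·s}. -/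
/-!
For large `x` the factor `e^{-x s}` decays faster than any power of `x`, so only the
polynomial parts survive: `T(x) = 2x²/r² + O(x)` and `A₁(x) = x/r + O(1)`, whence
`T/x² → 2/r²` and `(T - A₁²)/x² → 2/r² - 1/r²`. Near `0`, `T(0) = 0` and `c` is exactly
`T'(0)`, so `(T(x) - c x)/x` is the difference quotient of `T` at `0` minus its limit.
-/

open Real Set Filter Topology

lemma tendsto_exp_neg_mul_atTop {s : ℝ} (hs : 0 < s) :
    Tendsto (fun x : ℝ => exp (-x*s)) atTop (𝓝 0) :=
  tendsto_exp_comp_nhds_zero.mpr (tendsto_neg_atTop_atBot.atBot_mul_const hs)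

lemma HasDerivAt.tendsto_sub_mul_div_nhdsNE {f : ℝ → ℝ} {c : ℝ} (hf : HasDerivAt f c 0)
    (h0 : f 0 = 0) : Tendsto (fun x => (f x - c*x)/x) (𝓝[≠] 0) (𝓝 0) := by
  have hlim := hf.tendsto_slope_zero.sub_const c
  rw [sub_self] at hlim
  refine hlim.congr' ?_
  filter_upwards [self_mem_nhdsWithin] with x hx
  simp only [zero_add, h0, sub_zero, smul_eq_mul]
  field_simp [show x ≠ 0 from hx]

namespace ResettingArea

noncomputable def firstMoment (r xR s x : ℝ) : ℝ :=
  (xR/r) * exp (xR*s) * (1 - exp (-x*s)) + x/r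

/-- The second moment `T` of the paper, with `K` in place of `α₂ + 2/r³`. -/
noncomputable def secondMoment (r xR s K x : ℝ) : ℝ :=
  (1 - exp (-x*s)) * K + (2*x/r^2) * (x + xR * exp (xR*s))
    - (xR*x/r) * (x/s + 1/(2*r)) * exp (-(x - xR)*s)

variable {r xR s K : ℝ}

lemma secondMoment_zero : secondMoment r xR s K 0 = 0 := by
  simp [secondMoment]

lemma hasDerivAt_secondMoment_zero :
    HasDerivAt (secondMoment r xR s K) (s*K + 3*xR/(2*r^2) * exp (xR*s)) 0 := by
  have hx := hasDerivAt_id' (0:ℝ)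
  have hu := (hx.neg.mul_const s).exp
  have hv := ((hx.sub_const xR).neg.mul_const s).exp
  have hT := (((hu.const_sub 1).mul_const K).fun_add
    (((hx.const_mul 2).div_const (r^2)).fun_mul (hx.add_const (xR * exp (xR*s))))).fun_sub
    ((((hx.const_mul xR).div_const r).fun_mul ((hx.div_const s).add_const (1/(2*r)))).fun_mul hv)
  refine hT.congr_deriv ?_
  simp
  ring

lemma tendsto_firstMoment_div_atTop (hs : 0 < s) :
    Tendsto (fun x => firstMoment r xR s x / x) atTop (𝓝 (1/r)) := by
  -- write the quotient as a continuous function of `(e^{-x s}, 1/x) → (0, 0)`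
  have hF : Continuous fun p : ℝ × ℝ => xR/r*exp (xR*s)*(1 - p.1)*p.2 + 1/r := by fun_prop
  have hlim := (hF.tendsto (0, 0)).comp
    ((tendsto_exp_neg_mul_atTop hs).prodMk_nhds tendsto_inv_atTop_zero)
  convert hlim.congr' ?_ using 2
  · simp
  filter_upwards [eventually_ne_atTop 0] with x hx
  simp only [Function.comp_apply, firstMoment]
  field_simp

lemma tendsto_secondMoment_div_sq_atTop (hs : 0 < s) :
    Tendsto (fun x => secondMoment r xR s K x / x^2) atTop (𝓝 (2/r^2)) := by
  have hF : Continuous fun p : ℝ × ℝ =>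
      K*(1 - p.1)*p.2^2 + 2/r^2 + 2*xR*exp (xR*s)/r^2*p.2
        - xR*exp (xR*s)/r*(1/s + p.2/(2*r))*p.1 := by
    fun_prop
  have hlim := (hF.tendsto (0, 0)).comp
    ((tendsto_exp_neg_mul_atTop hs).prodMk_nhds tendsto_inv_atTop_zero)
  convert hlim.congr' ?_ using 2
  · simp
  filter_upwards [eventually_ne_atTop 0] with x hx
  have hshift : exp (-(x - xR)*s) = exp (xR*s) * exp (-x*s) := by rw [← exp_add]; ring_nf
  simp only [Function.comp_apply, secondMoment, hshift]
  field_simp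
  ring

lemma tendsto_secondMoment_sub_firstMoment_sq_div_sq_atTop (hs : 0 < s) :
    Tendsto (fun x => (secondMoment r xR s K x - firstMoment r xR s x ^ 2) / x^2) atTop
      (𝓝 (1/r^2)) := by
  have hlim := (tendsto_secondMoment_div_sq_atTop (r := r) (xR := xR) (K := K) hs).sub
    ((tendsto_firstMoment_div_atTop (r := r) (xR := xR) hs).pow 2)
  rw [div_pow, one_pow, show (2:ℝ)/r^2 - 1/r^2 = 1/r^2 by ring] at hlim
  refine hlim.congr fun x => ?_
  rw [sub_div, div_pow]

end ResettingArea

open ResettingArea in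
theorem stmt_10_general (r xR s α₂ c : ℝ) (hr : 0 < r)
    (hs : s = Real.sqrt (2*r))
    (A₁ T : ℝ → ℝ)
    (hA : ∀ x, A₁ x = (xR/r) * Real.exp (xR*s) * (1 - Real.exp (-x*s)) + x/r)
    (hT : ∀ x, T x = (1 - Real.exp (-x*s)) * (α₂ + 2/r^3)
      + (2*x/r^2) * (x + xR * Real.exp (xR*s))
      - (xR*x/r) * (x/s + 1/(2*r)) * Real.exp (-(x - xR)*s))
    (hc : c = s * (α₂ + 2/r^3) + (3*xR/(2*r^2)) * Real.exp (xR*s)) :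
    Filter.Tendsto (fun x => T x / x^2) Filter.atTop (nhds (2/r^2))
    ∧ Filter.Tendsto (fun x => (T x - (A₁ x)^2) / x^2) Filter.atTop (nhds (1/r^2))
    ∧ Filter.Tendsto (fun x => (T x - c * x) / x) (nhdsWithin 0 (Set.Ioi 0)) (nhds 0) := by
  have hs0 : 0 < s := hs ▸ Real.sqrt_pos.mpr (by positivity)
  obtain rfl : A₁ = firstMoment r xR s := funext hA
  obtain rfl : T = secondMoment r xR s (α₂ + 2/r^3) := funext hT
  subst hc
  refine ⟨tendsto_secondMoment_div_sq_atTop hs0,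
    tendsto_secondMoment_sub_firstMoment_sq_div_sq_atTop hs0, ?_⟩
  exact ((hasDerivAt_secondMoment_zero).tendsto_sub_mul_div_nhdsNE
    secondMoment_zero).mono_left (nhdsGT_le_nhdsNE 0)

theorem stmt_10 (r xR s α₂ c : ℝ) (hr : 0 < r) (hxR : 0 < xR)
    (hs : s = Real.sqrt (2*r))
    (hα2 : α₂ = (2 * Real.exp (xR*s) / r)
      * ((xR^2/r) * (3/4 + Real.exp (xR*s)) + 1/r^2 - xR^3/(2*s)) - 2/r^3)
    (A₁ T : ℝ → ℝ)
    (hA : ∀ x, A₁ x = (xR/r) * Real.exp (xR*s) * (1 - Real.exp (-x*s)) + x/r)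
    (hT : ∀ x, T x = (1 - Real.exp (-x*s)) * (α₂ + 2/r^3)
      + (2*x/r^2) * (x + xR * Real.exp (xR*s))
      - (xR*x/r) * (x/s + 1/(2*r)) * Real.exp (-(x - xR)*s))
    (hc : c = s * (α₂ + 2/r^3) + (3*xR/(2*r^2)) * Real.exp (xR*s)) :
    Filter.Tendsto (fun x => T x / x^2) Filter.atTop (nhds (2/r^2))
    ∧ Filter.Tendsto (fun x => (T x - (A₁ x)^2) / x^2) Filter.atTop (nhds (1/r^2))
    ∧ Filter.Tendsto (fun x => (T x - c * x) / x) (nhdsWithin 0 (Set.Ioi 0)) (nhds 0) :=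
  stmt_10_general r xR s α₂ c hr hs A₁ T hA hT hc
end

section
/- Let r > 0, x_R > 0, s = √(2r), T₁(x) = (1/r)·e^{x_R·s}·(1 − e^{−x·s}), A₁(x) = (x_R/r)·e^{x_R·s}·(1 − e^{−x·s}) + x/r, and V_R = e^{x_R·s}·((8·e^{x_R·s} − 1)·x_R/(4r²) − 3x_R²/(2r·s)). Define V(x) = −(x_R·e^{x_R·s}/r² + V_R)·e^{−x·s} + (e^{x_R·s} + 1)·x/r² + x_R·e^{x_R·s}/r² − e^{−(x − x_R)·s}·(x²/(2r·s) + (1 + 2x_R·s)·x/(4r²)) + V_R. Then: (i) for all x ≥ 0, (1/2)·V''(x) − r·V(x) = −x·T₁(x) − A₁(x) − r·V_R; (ii) V(0) = 0; (iii) V(x_R) = V_R; and (iv) there is a constant C > 0 such that V(x) ≤ C·x for all sufficiently large x. -/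
/-!
Since `r = s² / 2`, the operator `½ d²/dx² - r` annihilates `e^{-sx}`, and on `e^{-sx} q(x)` with `q`
quadratic it only sees `½ q'' - s q'`. Writing `V` as `e^{-sx}` times a quadratic plus an affine
function, the equation becomes a polynomial identity in `x`, `s`, `e^{x_R s}`; the boundary values are
direct substitutions, and the linear bound holds because `e^{-sx}` beats any quadratic.
-/

open Real Filter Topology

noncomputable def expQuad (s a b c x : ℝ) : ℝ := exp (-s * x) * (a * x ^ 2 + b * x + c)

section ExpQuad

variable (s a b c : ℝ)

theorem hasDerivAt_expQuad (x : ℝ) :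
    HasDerivAt (expQuad s a b c) (expQuad s (-s * a) (2 * a - s * b) (b - s * c) x) x := by
  have hexp : HasDerivAt (fun x => exp (-s * x)) (exp (-s * x) * -s) x := by
    simpa using ((hasDerivAt_id x).const_mul (-s)).exp
  have hquad : HasDerivAt (fun x => a * x ^ 2 + b * x + c) (a * (2 * x) + b) x := by
    simpa using (((hasDerivAt_pow 2 x).const_mul a).add ((hasDerivAt_id x).const_mul b)).add_const c
  refine (hexp.mul hquad).congr_deriv ?_
  rw [expQuad]
  ring

theorem deriv_expQuad_add_affine (β γ : ℝ) :
    deriv (fun x => expQuad s a b c x + β * x + γ) =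
      fun x => expQuad s (-s * a) (2 * a - s * b) (b - s * c) x + β :=
  funext fun x => by
    simpa using (((hasDerivAt_expQuad s a b c x).add ((hasDerivAt_id x).const_mul β)).add_const γ).deriv

theorem deriv_deriv_expQuad_add_affine (β γ : ℝ) :
    deriv (deriv fun x => expQuad s a b c x + β * x + γ) =
      expQuad s (s ^ 2 * a) (s ^ 2 * b - 4 * s * a) (2 * a - 2 * s * b + s ^ 2 * c) := by
  have h := deriv_expQuad_add_affine s (-s * a) (2 * a - s * b) (b - s * c) 0 β
  simp only [zero_mul, add_zero] at h
  rw [deriv_expQuad_add_affine, h]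
  funext x
  simp only [expQuad]
  ring

theorem tendsto_expQuad_atTop (hs : 0 < s) : Tendsto (expQuad s a b c) atTop (𝓝 0) := by
  have hpow (n : ℕ) : Tendsto (fun x : ℝ => x ^ n * exp (-s * x)) atTop (𝓝 0) := by
    simpa using tendsto_rpow_mul_exp_neg_mul_atTop_nhds_zero n s hs
  convert (((hpow 2).const_mul a).add ((hpow 1).const_mul b)).add ((hpow 0).const_mul c) using 1
  · funext x
    simp only [expQuad]
    ring
  · simp

theorem exists_eventually_expQuad_add_affine_le (hs : 0 < s) {β : ℝ} (hβ : 0 ≤ β) (γ : ℝ) :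
    ∃ C > (0 : ℝ), ∃ x₀ : ℝ, ∀ x ≥ x₀, expQuad s a b c x + β * x + γ ≤ C * x := by
  have hsmall : ∀ᶠ x in atTop, expQuad s a b c x < 1 :=
    (tendsto_order.1 (tendsto_expQuad_atTop s a b c hs)).2 1 one_pos
  obtain ⟨x₀, hx₀⟩ := eventually_atTop.1 (hsmall.and (eventually_ge_atTop (1 + |γ|)))
  refine ⟨β + 1, by positivity, x₀, fun x hx => ?_⟩
  obtain ⟨hlt, hge⟩ := hx₀ x hx
  nlinarith [le_abs_self γ]

end ExpQuad

theorem stmt_11_general (r xR s VR : ℝ) (hr : 0 < r)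
    (hs : s = Real.sqrt (2*r))
    (hVR : VR = Real.exp (xR*s)
      * ((8 * Real.exp (xR*s) - 1) * xR / (4*r^2) - 3*xR^2/(2*r*s)))
    (T₁ A₁ V : ℝ → ℝ)
    (hT1 : ∀ x, T₁ x = (1/r) * Real.exp (xR*s) * (1 - Real.exp (-x*s)))
    (hA1 : ∀ x, A₁ x = (xR/r) * Real.exp (xR*s) * (1 - Real.exp (-x*s)) + x/r)
    (hV : ∀ x, V x = -(xR * Real.exp (xR*s) / r^2 + VR) * Real.exp (-x*s)
      + (Real.exp (xR*s) + 1) * x / r^2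
      + xR * Real.exp (xR*s) / r^2
      - Real.exp (-(x - xR)*s) * (x^2/(2*r*s) + (1 + 2*xR*s) * x / (4*r^2))
      + VR) :
    (∀ x : ℝ, 0 ≤ x →
      (1/2) * deriv (deriv V) x - r * V x = -x * T₁ x - A₁ x - r * VR)
    ∧ V 0 = 0
    ∧ V xR = VR
    ∧ (∃ C > (0:ℝ), ∃ x₀ : ℝ, ∀ x ≥ x₀, V x ≤ C * x) := by
  have hs0 : 0 < s := hs ▸ sqrt_pos.2 (by positivity)
  have hr_eq : r = s ^ 2 / 2 := by rw [hs, sq_sqrt (by positivity)]; ring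
  have hV_expQuad : V = fun x => expQuad s (-exp (xR * s) / (2 * r * s))
      (-exp (xR * s) * (1 + 2 * xR * s) / (4 * r ^ 2)) (-(xR * exp (xR * s) / r ^ 2 + VR)) x
      + (exp (xR * s) + 1) / r ^ 2 * x + (xR * exp (xR * s) / r ^ 2 + VR) := by
    funext x
    rw [hV, expQuad, show -(x - xR) * s = -s * x + xR * s by ring,
      show -x * s = -s * x by ring, exp_add]
    ring
  refine ⟨fun x _ => ?_, by simp [hV], ?_, ?_⟩
  · rw [hV_expQuad, deriv_deriv_expQuad_add_affine, hT1, hA1]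
    simp only [expQuad]
    subst hr_eq
    field_simp
    ring
  · rw [hV, sub_self, neg_zero, zero_mul, exp_zero, neg_mul xR s, exp_neg]
    subst hVR hr_eq
    field_simp
    ring
  · rw [hV_expQuad]
    exact exists_eventually_expQuad_add_affine_le _ _ _ _ hs0 (by positivity) _

theorem stmt_11 (r xR s VR : ℝ) (hr : 0 < r) (hxR : 0 < xR)
    (hs : s = Real.sqrt (2*r))
    (hVR : VR = Real.exp (xR*s)
      * ((8 * Real.exp (xR*s) - 1) * xR / (4*r^2) - 3*xR^2/(2*r*s)))
    (T₁ A₁ V : ℝ → ℝ)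
    (hT1 : ∀ x, T₁ x = (1/r) * Real.exp (xR*s) * (1 - Real.exp (-x*s)))
    (hA1 : ∀ x, A₁ x = (xR/r) * Real.exp (xR*s) * (1 - Real.exp (-x*s)) + x/r)
    (hV : ∀ x, V x = -(xR * Real.exp (xR*s) / r^2 + VR) * Real.exp (-x*s)
      + (Real.exp (xR*s) + 1) * x / r^2
      + xR * Real.exp (xR*s) / r^2
      - Real.exp (-(x - xR)*s) * (x^2/(2*r*s) + (1 + 2*xR*s) * x / (4*r^2))
      + VR) :
    (∀ x : ℝ, 0 ≤ x →
      (1/2) * deriv (deriv V) x - r * V x = -x * T₁ x - A₁ x - r * VR)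
    ∧ V 0 = 0
    ∧ V xR = VR
    ∧ (∃ C > (0:ℝ), ∃ x₀ : ℝ, ∀ x ≥ x₀, V x ≤ C * x) :=
  stmt_11_general r xR s VR hr hs hVR T₁ A₁ V hT1 hA1 hV
end

section
/- Let r > 0, x_R > 0, z > 0, s = √(2r), and set c₁ = 1/((e^{z·s} − 1)·(e^{−z·s} + e^{−2x_R·s})), c₂ = −e^{−2x_R·s}·c₁, a = 1 − c₁ − c₂. Define w(y) = c₁·e^{−y·s} + c₂·e^{y·s} + a. Then: (i) for all y, (1/2)·w''(y) − r·w(y) + r·w(x_R) = 0; (ii) w(0) = 1; (iii) w(z) = 0; and (iv) w(x_R) = a. -/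
open Real Set Filter

/-!
Both `y ↦ exp (-y s)` and `y ↦ exp (y s)` solve `w'' = s² w`, so with `s² = 2r` every
`w = c₁ exp (-y s) + c₂ exp (y s) + a` satisfies `½ w'' - r w + r a = 0`.
The choice `c₂ = -exp (-2 x_R s) c₁` makes the exponential part vanish at `x_R`, whence
`w(x_R) = a` and the equation holds with `r w(x_R)` in place of `r a`; `a = 1 - c₁ - c₂` gives
`w(0) = 1`, and `c₁` is the normalisation that makes `w(z) = 0`.
-/

-- The `+ 0` keeps the result in the same shape, so the lemma applies again to the derivative.
theorem deriv_exp_combination (c₁ c₂ a s : ℝ) :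
    deriv (fun y => c₁ * exp (-y*s) + c₂ * exp (y*s) + a)
      = fun y => (-s * c₁) * exp (-y*s) + (s * c₂) * exp (y*s) + 0 := by
  funext y
  have h₁ := ((hasDerivAt_neg y).mul_const s).exp.const_mul c₁
  have h₂ := ((hasDerivAt_id y).mul_const s).exp.const_mul c₂
  refine ((h₁.add h₂).add_const a).deriv.trans ?_
  simp only [id]
  ring

theorem deriv_deriv_exp_combination (c₁ c₂ a s : ℝ) :
    deriv (deriv fun y => c₁ * exp (-y*s) + c₂ * exp (y*s) + a)
      = fun y => s ^ 2 * (c₁ * exp (-y*s) + c₂ * exp (y*s)) := by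
  rw [deriv_exp_combination, deriv_exp_combination]
  funext y
  ring

theorem stmt_12_general (r xR z s c₁ c₂ a : ℝ) (hr : 0 < r) (hz : 0 < z)
    (hs : s = Real.sqrt (2*r))
    (hc1 : c₁ = 1 / ((Real.exp (z*s) - 1) * (Real.exp (-z*s) + Real.exp (-2*xR*s))))
    (hc2 : c₂ = -Real.exp (-2*xR*s) * c₁)
    (ha : a = 1 - c₁ - c₂)
    (w : ℝ → ℝ)
    (hw : ∀ y, w y = c₁ * Real.exp (-y*s) + c₂ * Real.exp (y*s) + a) :
    (∀ y : ℝ, (1/2) * deriv (deriv w) y - r * w y + r * w xR = 0)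
    ∧ w 0 = 1
    ∧ w z = 0
    ∧ w xR = a := by
  have hs_sq : s ^ 2 = 2 * r := hs ▸ sq_sqrt (by positivity)
  have hs_pos : 0 < s := hs ▸ sqrt_pos.mpr (by positivity)
  have hw_xR : w xR = a := by
    have : exp (-2*xR*s) * exp (xR*s) = exp (-xR*s) := by rw [← exp_add]; ring_nf
    rw [hw, hc2]
    linear_combination -c₁ * this
  refine ⟨fun y => ?_, by simp [hw, ha], ?_, hw_xR⟩
  · have hw'' : deriv (deriv w) y = s ^ 2 * (w y - a) := by
      rw [show w = _ from funext hw, deriv_deriv_exp_combination]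
      ring
    rw [hw'', hw_xR, hs_sq]
    ring
  · have hden : (exp (z*s) - 1) * (exp (-z*s) + exp (-2*xR*s)) ≠ 0 := by
      have h_gt_one : 1 < exp (z*s) := one_lt_exp_iff.mpr (by positivity)
      have h_pos : 0 < exp (-z*s) + exp (-2*xR*s) := by positivity
      exact mul_ne_zero (sub_ne_zero.mpr h_gt_one.ne') h_pos.ne'
    have hc1_mul : c₁ * ((exp (z*s) - 1) * (exp (-z*s) + exp (-2*xR*s))) = 1 := by
      rw [hc1, one_div_mul_cancel hden]
    have hexp : exp (-z*s) * exp (z*s) = 1 := by rw [← exp_add]; simp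
    rw [hw]
    linear_combination ha + (exp (z*s) - 1) * hc2 - hc1_mul + c₁ * hexp

theorem stmt_12 (r xR z s c₁ c₂ a : ℝ) (hr : 0 < r) (hxR : 0 < xR) (hz : 0 < z)
    (hs : s = Real.sqrt (2*r))
    (hc1 : c₁ = 1 / ((Real.exp (z*s) - 1) * (Real.exp (-z*s) + Real.exp (-2*xR*s))))
    (hc2 : c₂ = -Real.exp (-2*xR*s) * c₁)
    (ha : a = 1 - c₁ - c₂)
    (w : ℝ → ℝ)
    (hw : ∀ y, w y = c₁ * Real.exp (-y*s) + c₂ * Real.exp (y*s) + a) :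
    (∀ y : ℝ, (1/2) * deriv (deriv w) y - r * w y + r * w xR = 0)
    ∧ w 0 = 1
    ∧ w z = 0
    ∧ w xR = a :=
  stmt_12_general r xR z s c₁ c₂ a hr hz hs hc1 hc2 ha w hw
end

section
/- Let λ > 0, r > 0, x_R > 0, μ ∈ ℝ, and set s = μ + √(μ² + 2(λ + r)) and M_R = (λ + r)·exp(−x_R·s)/(λ + r·exp(−x_R·s)). Define M(x) = exp(−x·s) + M_R·(r/(λ + r))·(1 − exp(−x·s)). Then: (i) for all x, (1/2)·M''(x) + μ·M'(x) − (λ + r)·M(x) + r·M(x_R) = 0; (ii) M(0) = 1; (iii) M(x) tends to a finite limit as x → +∞; and (iv) M(x_R) = M_R. -/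
/-!
Since `s` is the positive root of `s² / 2 - μ s - (λ + r) = 0`, the function `M` is of the form
`b + k e^{-s x}` with `b = M_R r / (λ + r)`: the exponential part solves the homogeneous equation
`M'' / 2 + μ M' - (λ + r) M = 0`, the constant `b` contributes `-(λ + r) b = -r M_R`, and
`M(x_R) = M_R` is the equation defining `M_R`. As `s > 0`, `M` tends to `b` at infinity.
-/

open Real Filter

theorem pos_of_eq_add_sqrt {μ c s : ℝ} (hc : 0 < c) (hs : s = μ + √(μ ^ 2 + 2 * c)) : 0 < s := by
  have := neg_sqrt_lt_of_sq_lt (x := μ) (y := μ ^ 2 + 2 * c) (by linarith)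
  linarith

theorem half_sq_sub_mul_of_eq_add_sqrt {μ c s : ℝ} (hc : 0 < c)
    (hs : s = μ + √(μ ^ 2 + 2 * c)) : s ^ 2 / 2 - μ * s = c := by
  have hsq : √(μ ^ 2 + 2 * c) ^ 2 = μ ^ 2 + 2 * c := Real.sq_sqrt (by positivity)
  subst hs
  linear_combination hsq / 2

theorem deriv_mul_exp_neg_mul (k s : ℝ) :
    deriv (fun x => k * exp (-x * s)) = fun x => (-s * k) * exp (-x * s) := by
  funext x
  have h : HasDerivAt (fun x => k * exp (-x * s)) (k * (exp (-x * s) * (-1 * s))) x :=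
    (((hasDerivAt_id' x).neg.mul_const s).exp).const_mul k
  rw [h.deriv]
  ring

theorem deriv_const_add_mul_exp_neg_mul (b k s : ℝ) :
    deriv (fun x => b + k * exp (-x * s)) = fun x => (-s * k) * exp (-x * s) := by
  rw [deriv_const_add', deriv_mul_exp_neg_mul]

theorem ode_const_add_mul_exp_neg_mul {μ c s : ℝ} (b k : ℝ) (hs : s ^ 2 / 2 - μ * s = c) (x : ℝ) :
    (1 / 2) * deriv (deriv fun x => b + k * exp (-x * s)) x
      + μ * deriv (fun x => b + k * exp (-x * s)) x - c * (b + k * exp (-x * s)) = -c * b := by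
  rw [deriv_const_add_mul_exp_neg_mul, deriv_mul_exp_neg_mul]
  linear_combination (k * exp (-x * s)) * hs

theorem tendsto_const_add_mul_exp_neg_mul (b k : ℝ) {s : ℝ} (hs : 0 < s) :
    Tendsto (fun x => b + k * exp (-x * s)) atTop (nhds b) := by
  have hexp : Tendsto (fun x => exp (-x * s)) atTop (nhds 0) := by
    simp only [neg_mul]
    exact tendsto_exp_atBot.comp (tendsto_neg_atTop_atBot.comp (tendsto_id.atTop_mul_const hs))
  simpa using (hexp.const_mul k).const_add b

theorem stmt_14_general (lam r xR μ s MR : ℝ) (hlam : 0 < lam) (hr : 0 < r)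
    (hs : s = μ + Real.sqrt (μ^2 + 2*(lam + r)))
    (hMR : MR = (lam + r) * Real.exp (-xR*s) / (lam + r * Real.exp (-xR*s)))
    (M : ℝ → ℝ)
    (hM : ∀ x, M x = Real.exp (-x*s) + MR * (r/(lam + r)) * (1 - Real.exp (-x*s))) :
    (∀ x : ℝ, (1/2) * deriv (deriv M) x + μ * deriv M x - (lam + r) * M x + r * M xR = 0)
    ∧ M 0 = 1
    ∧ (∃ L : ℝ, Filter.Tendsto M Filter.atTop (nhds L))
    ∧ M xR = MR := by
  have hc : 0 < lam + r := by linarith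
  obtain ⟨b, hb_def⟩ : ∃ b, b = MR * (r / (lam + r)) := ⟨_, rfl⟩
  have hb : (lam + r) * b = r * MR := by
    rw [hb_def]
    field_simp
  have hMeq : M = fun x => b + (1 - b) * exp (-x * s) := by
    funext x
    rw [hM, hb_def]
    ring
  have hMxR : M xR = MR := by
    have hden : lam + r * exp (-xR * s) ≠ 0 := by positivity
    rw [hM, hMR]
    field_simp
    ring
  refine ⟨fun x => ?_, by simp [hM], ⟨b, ?_⟩, hMxR⟩
  · have hode := ode_const_add_mul_exp_neg_mul b (1 - b) (half_sq_sub_mul_of_eq_add_sqrt hc hs) x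
    rw [hMxR, hMeq]
    linear_combination hode - hb
  · rw [hMeq]
    exact tendsto_const_add_mul_exp_neg_mul b (1 - b) (pos_of_eq_add_sqrt hc hs)

theorem stmt_14 (lam r xR μ s MR : ℝ) (hlam : 0 < lam) (hr : 0 < r) (hxR : 0 < xR)
    (hs : s = μ + Real.sqrt (μ^2 + 2*(lam + r)))
    (hMR : MR = (lam + r) * Real.exp (-xR*s) / (lam + r * Real.exp (-xR*s)))
    (M : ℝ → ℝ)
    (hM : ∀ x, M x = Real.exp (-x*s) + MR * (r/(lam + r)) * (1 - Real.exp (-x*s))) :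
    (∀ x : ℝ, (1/2) * deriv (deriv M) x + μ * deriv M x - (lam + r) * M x + r * M xR = 0)
    ∧ M 0 = 1
    ∧ (∃ L : ℝ, Filter.Tendsto M Filter.atTop (nhds L))
    ∧ M xR = MR :=
  stmt_14_general lam r xR μ s MR hlam hr hs hMR M hM
end

section
/- Let r > 0, x_R > 0, μ ∈ ℝ, set q = √(μ² + 2r), s = μ + q, and T₁(x) = (1/r)·e^{x_R·s}·(1 − e^{−x·s}). Define T₂(x) = e^{x_R·s}·((2/r²)·e^{x_R·s} − 2/r² − 2x_R/(r·q))·(1 − e^{−x·s}) − (2/r)·e^{(x_R − x)·s}·(1/r + x/q) + (2/r²)·e^{x_R·s}. Then: (i) for all x ≥ 0, (1/2)·T₂''(x) + μ·T₂'(x) − r·T₂(x) = −2·T₁(x) − r·T₂(x_R); (ii) T₂(0) = 0; and (iii) T₂ is bounded on [0, ∞). -/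
open Real Set Filter

/-!
`T₂ x = a (1 - e^{-s x}) + c x e^{-s x}` lies in the family `a + (b + c x) e^{-s x}`, which the
operator `L = ½ D² + μ D - r` maps into itself: `s` is a root of `s² / 2 - μ s - r = 0`, so
`e^{-s x}` lies in the kernel of `L`, while `L (x e^{-s x}) = (μ - s) e^{-s x} = -q e^{-s x}`.
Identity (i) then comes down to the value `T₂ x_R = a - 2 e^{x_R s} / r²`, and since `s > 0` the
exponential decay bounds `T₂` on `[0, ∞)`.
-/

noncomputable def affineExpNeg (a b c s : ℝ) (x : ℝ) : ℝ := a + (b + c * x) * exp (-x * s)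

section affineExpNeg

variable (a b c s : ℝ)

theorem hasDerivAt_affineExpNeg (x : ℝ) :
    HasDerivAt (affineExpNeg a b c s) (affineExpNeg 0 (c - s * b) (-(s * c)) s x) x := by
  have hexp : HasDerivAt (fun y => exp (-y * s)) (exp (-x * s) * (-1 * s)) x :=
    (((hasDerivAt_id x).neg).mul_const s).exp
  have hlin : HasDerivAt (fun y => b + c * y) c x := by
    simpa using ((hasDerivAt_id x).const_mul c).const_add b
  refine ((hlin.mul hexp).const_add a).congr_deriv ?_
  rw [affineExpNeg]
  ring

theorem deriv_affineExpNeg :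
    deriv (affineExpNeg a b c s) = affineExpNeg 0 (c - s * b) (-(s * c)) s :=
  funext fun x => (hasDerivAt_affineExpNeg a b c s x).deriv

theorem generator_affineExpNeg {μ r : ℝ} (hchar : s ^ 2 = 2 * (μ * s + r)) (x : ℝ) :
    (1/2) * deriv (deriv (affineExpNeg a b c s)) x + μ * deriv (affineExpNeg a b c s) x
        - r * affineExpNeg a b c s x
      = -(r * a) + c * (μ - s) * exp (-x * s) := by
  simp only [deriv_affineExpNeg, affineExpNeg]
  linear_combination (1/2) * (b + c * x) * exp (-x * s) * hchar

theorem abs_affineExpNeg_le (hs : 0 < s) {x : ℝ} (hx : 0 ≤ x) :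
    |affineExpNeg a b c s x| ≤ |a| + |b| + |c| / s := by
  have hexp_le : exp (-x * s) ≤ 1 := exp_le_one_iff.mpr (by nlinarith)
  have hdecay : x * exp (-x * s) ≤ 1 / s := by
    have h := mul_exp_neg_le_exp_neg_one (x * s)
    rw [le_div_iff₀ hs]
    calc x * exp (-x * s) * s = x * s * exp (-(x * s)) := by ring_nf
      _ ≤ exp (-1) := h
      _ ≤ 1 := exp_le_one_iff.mpr (by norm_num)
  have hpos := exp_pos (-x * s)
  have hsplit : affineExpNeg a b c s x = a + b * exp (-x * s) + c * (x * exp (-x * s)) := by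
    rw [affineExpNeg]
    ring
  have hb : |b| * exp (-x * s) ≤ |b| := mul_le_of_le_one_right (abs_nonneg b) hexp_le
  have hc : |c| * (x * exp (-x * s)) ≤ |c| / s :=
    (mul_le_mul_of_nonneg_left hdecay (abs_nonneg c)).trans_eq (mul_one_div _ _)
  rw [hsplit]
  refine (abs_add_three _ _ _).trans ?_
  rw [abs_mul, abs_mul, abs_of_pos hpos, abs_of_nonneg (mul_nonneg hx hpos.le)]
  linarith

end affineExpNeg

theorem add_sqrt_sq_add_pos {μ r : ℝ} (hr : 0 < r) : 0 < μ + √(μ ^ 2 + 2 * r) := by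
  have : |μ| < √(μ ^ 2 + 2 * r) := by
    rw [← sqrt_sq_eq_abs]
    exact sqrt_lt_sqrt (sq_nonneg μ) (by linarith)
  linarith [neg_abs_le μ]

theorem stmt_16_general (r xR μ q s : ℝ) (hr : 0 < r)
    (hq : q = Real.sqrt (μ^2 + 2*r)) (hs : s = μ + q)
    (T₁ T₂ : ℝ → ℝ)
    (hT1 : ∀ x, T₁ x = (1/r) * Real.exp (xR*s) * (1 - Real.exp (-x*s)))
    (hT2 : ∀ x, T₂ x =
      Real.exp (xR*s) * ((2/r^2) * Real.exp (xR*s) - 2/r^2 - 2*xR/(r*q))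
        * (1 - Real.exp (-x*s))
      - (2/r) * Real.exp ((xR - x)*s) * (1/r + x/q)
      + (2/r^2) * Real.exp (xR*s)) :
    (∀ x : ℝ, 0 ≤ x →
      (1/2) * deriv (deriv T₂) x + μ * deriv T₂ x - r * T₂ x
        = -2 * T₁ x - r * T₂ xR)
    ∧ T₂ 0 = 0
    ∧ (∃ C, ∀ x ∈ Set.Ici (0:ℝ), |T₂ x| ≤ C) := by
  have hs_pos : 0 < s := hs ▸ hq ▸ add_sqrt_sq_add_pos hr
  have hq_pos : 0 < q := hq ▸ sqrt_pos.mpr (by positivity)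
  have hq_sq : q ^ 2 = μ ^ 2 + 2 * r := hq ▸ sq_sqrt (by positivity)
  have hchar : s ^ 2 = 2 * (μ * s + r) := by rw [hs]; linear_combination hq_sq
  set E := exp (xR * s) with hE
  set a := E * ((2/r^2) * E - 2/r^2 - 2*xR/(r*q)) + (2/r^2) * E with ha
  set c := -(2 * E / (r * q)) with hc
  have hE_pos : 0 < E := exp_pos _
  have hT2_eq : T₂ = affineExpNeg a (-a) c s := funext fun x => by
    have hshift : exp ((xR - x) * s) = E * exp (-x * s) := by rw [hE, ← exp_add]; ring_nf
    rw [hT2, affineExpNeg, hshift, ha, hc]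
    ring
  have hT2_xR : T₂ xR = a - 2 * E / r ^ 2 := by
    have hinv : exp (-xR * s) = E⁻¹ := by rw [hE, ← exp_neg, neg_mul]
    rw [hT2_eq, affineExpNeg, hinv, ha, hc]
    field_simp
    ring
  refine ⟨fun x _ => ?_, ?_, ⟨|a| + |-a| + |c| / s, fun x hx => ?_⟩⟩
  · rw [hT2_eq, generator_affineExpNeg _ _ _ _ hchar, ← hT2_eq, hT2_xR, hT1,
      show μ - s = -q by rw [hs]; ring, hc]
    field_simp
    ring
  · simp [hT2_eq, affineExpNeg]
  · exact hT2_eq ▸ abs_affineExpNeg_le _ _ _ _ hs_pos hx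

theorem stmt_16 (r xR μ q s : ℝ) (hr : 0 < r) (hxR : 0 < xR)
    (hq : q = Real.sqrt (μ^2 + 2*r)) (hs : s = μ + q)
    (T₁ T₂ : ℝ → ℝ)
    (hT1 : ∀ x, T₁ x = (1/r) * Real.exp (xR*s) * (1 - Real.exp (-x*s)))
    (hT2 : ∀ x, T₂ x =
      Real.exp (xR*s) * ((2/r^2) * Real.exp (xR*s) - 2/r^2 - 2*xR/(r*q))
        * (1 - Real.exp (-x*s))
      - (2/r) * Real.exp ((xR - x)*s) * (1/r + x/q)
      + (2/r^2) * Real.exp (xR*s)) :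
    (∀ x : ℝ, 0 ≤ x →
      (1/2) * deriv (deriv T₂) x + μ * deriv T₂ x - r * T₂ x
        = -2 * T₁ x - r * T₂ xR)
    ∧ T₂ 0 = 0
    ∧ (∃ C, ∀ x ∈ Set.Ici (0:ℝ), |T₂ x| ≤ C) :=
  stmt_16_general r xR μ q s hr hq hs T₁ T₂ hT1 hT2
end

section
/- Let r > 0, x_R > 0, μ ∈ ℝ, set s = μ + √(μ² + 2r) and α = e^{x_R·s}·(x_R/r + (μ/r²)·(1 − e^{−x_R·s})). Define T(x) = α·(1 − e^{−x·s}) + x/r + (μ/r²)·(1 − e^{−x·s}). Then: (i) for all x ≥ 0, (1/2)·T''(x) + μ·T'(x) − r·T(x) = −x − r·T(x_R); (ii) T(0) = 0; and (iii) T(x_R) = α. -/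
open Real

/-!
Writing `T x = c (1 - e^{-s x}) + x / r` with `c = α + μ / r²`, the exponential part is annihilated
by `½ D² + μ D - r` because `s` is a root of `½ s² - μ s - r`, so only the affine part contributes.
The choice of `α` is exactly the condition `T x_R = α`.
-/

lemma sq_eq_of_eq_add_sqrt {μ r s : ℝ} (hr : 0 ≤ r) (hs : s = μ + √(μ ^ 2 + 2 * r)) :
    s ^ 2 = 2 * μ * s + 2 * r := by
  have hsqrt : √(μ ^ 2 + 2 * r) ^ 2 = μ ^ 2 + 2 * r := Real.sq_sqrt (by positivity)
  rw [hs]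
  linear_combination hsqrt

noncomputable def expRamp (c s k x : ℝ) : ℝ := c * (1 - exp (-x * s)) + k * x

section ExpRamp

variable (c s k : ℝ)

lemma hasDerivAt_exp_neg_mul (x : ℝ) :
    HasDerivAt (fun y => exp (-y * s)) (-s * exp (-x * s)) x := by
  convert ((hasDerivAt_neg x).mul_const s).exp using 1
  ring

lemma hasDerivAt_expRamp (x : ℝ) : HasDerivAt (expRamp c s k) (c * s * exp (-x * s) + k) x := by
  have h := (((hasDerivAt_exp_neg_mul s x).const_sub 1).const_mul c).add
    ((hasDerivAt_id' x).const_mul k)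
  exact h.congr_deriv (by ring)

lemma deriv_expRamp : deriv (expRamp c s k) = fun x => c * s * exp (-x * s) + k :=
  funext fun x => (hasDerivAt_expRamp c s k x).deriv

lemma deriv_deriv_expRamp (x : ℝ) :
    deriv (deriv (expRamp c s k)) x = -(c * s ^ 2 * exp (-x * s)) := by
  rw [deriv_expRamp]
  convert (((hasDerivAt_exp_neg_mul s x).const_mul (c * s)).add_const k).deriv using 1
  ring

lemma expRamp_ode {μ r : ℝ} (hchar : s ^ 2 = 2 * μ * s + 2 * r) (x : ℝ) :
    (1 / 2) * deriv (deriv (expRamp c s k)) x + μ * deriv (expRamp c s k) x - r * expRamp c s k x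
      = μ * k - r * c - r * k * x := by
  rw [deriv_deriv_expRamp, deriv_expRamp, expRamp]
  linear_combination (-(c * exp (-x * s)) / 2) * hchar

end ExpRamp

theorem stmt_17_general (r xR μ s α : ℝ) (hr : 0 < r)
    (hs : s = μ + Real.sqrt (μ^2 + 2*r))
    (hα : α = Real.exp (xR*s) * (xR/r + (μ/r^2) * (1 - Real.exp (-xR*s))))
    (T : ℝ → ℝ)
    (hT : ∀ x, T x = α * (1 - Real.exp (-x*s)) + x/r
      + (μ/r^2) * (1 - Real.exp (-x*s))) :
    (∀ x : ℝ, 0 ≤ x →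
      (1/2) * deriv (deriv T) x + μ * deriv T x - r * T x = -x - r * T xR)
    ∧ T 0 = 0
    ∧ T xR = α := by
  have hT_eq : T = expRamp (α + μ / r ^ 2) s r⁻¹ := by
    funext y; rw [hT, expRamp]; ring
  have hTxR : T xR = α := by
    have hα_exp : α * exp (-xR * s) = xR / r + μ / r ^ 2 * (1 - exp (-xR * s)) := by
      rw [hα, mul_comm, ← mul_assoc, ← exp_add]
      simp
    rw [hT]
    linear_combination -hα_exp
  refine ⟨fun x _ => ?_, by simp [hT], hTxR⟩
  rw [hTxR, hT_eq, expRamp_ode _ _ _ (sq_eq_of_eq_add_sqrt hr.le hs)]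
  field_simp
  ring

theorem stmt_17 (r xR μ s α : ℝ) (hr : 0 < r) (hxR : 0 < xR)
    (hs : s = μ + Real.sqrt (μ^2 + 2*r))
    (hα : α = Real.exp (xR*s) * (xR/r + (μ/r^2) * (1 - Real.exp (-xR*s))))
    (T : ℝ → ℝ)
    (hT : ∀ x, T x = α * (1 - Real.exp (-x*s)) + x/r
      + (μ/r^2) * (1 - Real.exp (-x*s))) :
    (∀ x : ℝ, 0 ≤ x →
      (1/2) * deriv (deriv T) x + μ * deriv T x - r * T x = -x - r * T xR)
    ∧ T 0 = 0
    ∧ T xR = α :=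
  stmt_17_general r xR μ s α hr hs hα T hT
end

section
/- Let r > 0, x_R > 0, z > 0, μ ∈ ℝ, set q = √(μ² + 2r), d₁ = −μ − q, d₂ = −μ + q, and define c₁ = −1/(exp(−(μ + q)·z) − 1 + exp(−2x_R·q)·(1 − exp(−(μ − q)·z))), c₂ = −c₁·exp(−2x_R·q), a = 1 − c₁ − c₂. Define w(y) = c₁·e^{d₁·y} + c₂·e^{d₂·y} + a. Then: (i) for all y, (1/2)·w''(y) + μ·w'(y) − r·w(y) + r·w(x_R) = 0; (ii) w(0) = 1; (iii) w(z) = 0; and (iv) w(x_R) = a. -/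
/-!
Both exponents `d₁, d₂ = -μ ∓ q` are roots of the characteristic polynomial
`d² / 2 + μ d - r`, so each exponential solves the homogeneous equation and the constant `a`
absorbs the inhomogeneity `r w(x_R)` once `w(x_R) = a`, i.e. once the exponentials cancel at
`x_R`; this cancellation is exactly the choice `c₂ = -c₁ e^{-2 x_R q}`, because `d₂ - d₁ = 2q`.
The value `c₁` is then forced by `w(z) = 0`, and its denominator is negative since
`-(μ + q) < 0 < -(μ - q)` when `r > 0`.
-/

open Real

theorem hasDerivAt_expSum (c₁ c₂ d₁ d₂ a y : ℝ) :
    HasDerivAt (fun y => c₁ * exp (d₁ * y) + c₂ * exp (d₂ * y) + a)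
      (c₁ * d₁ * exp (d₁ * y) + c₂ * d₂ * exp (d₂ * y) + 0) y := by
  have hexp : ∀ d, HasDerivAt (fun y => exp (d * y)) (d * exp (d * y)) y := fun d => by
    simpa [mul_comm] using ((hasDerivAt_id y).const_mul d).exp
  simpa [mul_assoc] using (((hexp d₁).const_mul c₁).add ((hexp d₂).const_mul c₂)).add_const a

theorem deriv_expSum (c₁ c₂ d₁ d₂ a : ℝ) :
    deriv (fun y => c₁ * exp (d₁ * y) + c₂ * exp (d₂ * y) + a)
      = fun y => c₁ * d₁ * exp (d₁ * y) + c₂ * d₂ * exp (d₂ * y) + 0 :=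
  funext fun y => (hasDerivAt_expSum c₁ c₂ d₁ d₂ a y).deriv

theorem char_poly_eq_zero {μ r q d : ℝ} (hq : q ^ 2 = μ ^ 2 + 2 * r) (hd : (d + μ) ^ 2 = q ^ 2) :
    1 / 2 * d ^ 2 + μ * d - r = 0 := by
  linear_combination hd / 2 + hq / 2

theorem expSum_ode {μ r c₁ c₂ d₁ d₂ a : ℝ} {w : ℝ → ℝ}
    (hw : w = fun y => c₁ * exp (d₁ * y) + c₂ * exp (d₂ * y) + a)
    (hd₁ : 1 / 2 * d₁ ^ 2 + μ * d₁ - r = 0) (hd₂ : 1 / 2 * d₂ ^ 2 + μ * d₂ - r = 0) (y : ℝ) :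
    1 / 2 * deriv (deriv w) y + μ * deriv w y - r * w y + r * a = 0 := by
  simp only [hw, deriv_expSum]
  linear_combination c₁ * exp (d₁ * y) * hd₁ + c₂ * exp (d₂ * y) * hd₂

theorem abs_lt_sqrt_sq_add {μ r : ℝ} (hr : 0 < r) : |μ| < √(μ ^ 2 + 2 * r) := by
  rw [← sqrt_sq_eq_abs]
  exact sqrt_lt_sqrt (sq_nonneg μ) (by linarith)

theorem exp_sub_one_add_mul_one_sub_exp_lt_zero {μ q z t : ℝ} (hμq : |μ| < q) (hz : 0 < z)
    (ht : 0 ≤ t) : exp (-(μ + q) * z) - 1 + t * (1 - exp (-(μ - q) * z)) < 0 := by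
  obtain ⟨hlt, hgt⟩ := abs_lt.mp hμq
  have h₁ : exp (-(μ + q) * z) < 1 := exp_lt_one_iff.mpr (by nlinarith)
  have h₂ : 1 < exp (-(μ - q) * z) := one_lt_exp_iff.mpr (by nlinarith)
  nlinarith

theorem stmt_18_general (r xR z μ q d₁ d₂ c₁ c₂ a : ℝ) (hr : 0 < r)
    (hz : 0 < z)
    (hq : q = Real.sqrt (μ^2 + 2*r))
    (hd1 : d₁ = -μ - q) (hd2 : d₂ = -μ + q)
    (hc1 : c₁ = -1 / (Real.exp (-(μ + q)*z) - 1
      + Real.exp (-2*xR*q) * (1 - Real.exp (-(μ - q)*z))))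
    (hc2 : c₂ = -c₁ * Real.exp (-2*xR*q))
    (ha : a = 1 - c₁ - c₂)
    (w : ℝ → ℝ)
    (hw : ∀ y, w y = c₁ * Real.exp (d₁*y) + c₂ * Real.exp (d₂*y) + a) :
    (∀ y : ℝ, (1/2) * deriv (deriv w) y + μ * deriv w y - r * w y + r * w xR = 0)
    ∧ w 0 = 1
    ∧ w z = 0
    ∧ w xR = a := by
  have hq2 : q ^ 2 = μ ^ 2 + 2 * r := by rw [hq, sq_sqrt (by positivity)]
  have hw_xR : w xR = a := by
    have hshift : exp (d₁ * xR) = exp (-2 * xR * q) * exp (d₂ * xR) := by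
      rw [← exp_add, hd1, hd2]; ring_nf
    rw [hw, hshift, hc2]; ring
  have hD := exp_sub_one_add_mul_one_sub_exp_lt_zero (hq ▸ abs_lt_sqrt_sq_add (μ := μ) hr) hz
    (exp_pos (-2 * xR * q)).le
  refine ⟨fun y => ?_, by simp [hw, ha], ?_, hw_xR⟩
  · rw [hw_xR]
    exact expSum_ode (funext hw) (char_poly_eq_zero hq2 (by rw [hd1]; ring))
      (char_poly_eq_zero hq2 (by rw [hd2]; ring)) y
  · have e₁ : d₁ * z = -(μ + q) * z := by rw [hd1]; ring
    have e₂ : d₂ * z = -(μ - q) * z := by rw [hd2]; ring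
    have hc₁D : c₁ * (exp (-(μ + q) * z) - 1 + exp (-2 * xR * q) * (1 - exp (-(μ - q) * z)))
        = -1 := by rw [hc1, div_mul_cancel₀ _ hD.ne]
    rw [hw, e₁, e₂, ha, hc2]
    linear_combination hc₁D

theorem stmt_18 (r xR z μ q d₁ d₂ c₁ c₂ a : ℝ) (hr : 0 < r) (hxR : 0 < xR)
    (hz : 0 < z)
    (hq : q = Real.sqrt (μ^2 + 2*r))
    (hd1 : d₁ = -μ - q) (hd2 : d₂ = -μ + q)
    (hc1 : c₁ = -1 / (Real.exp (-(μ + q)*z) - 1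
      + Real.exp (-2*xR*q) * (1 - Real.exp (-(μ - q)*z))))
    (hc2 : c₂ = -c₁ * Real.exp (-2*xR*q))
    (ha : a = 1 - c₁ - c₂)
    (w : ℝ → ℝ)
    (hw : ∀ y, w y = c₁ * Real.exp (d₁*y) + c₂ * Real.exp (d₂*y) + a) :
    (∀ y : ℝ, (1/2) * deriv (deriv w) y + μ * deriv w y - r * w y + r * w xR = 0)
    ∧ w 0 = 1
    ∧ w z = 0
    ∧ w xR = a :=
  stmt_18_general r xR z μ q d₁ d₂ c₁ c₂ a hr hz hq hd1 hd2 hc1 hc2 ha w hw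
end

section
/- Let μ < 0 and x > 0. Then ∫_x^∞ z · (μ·e^{−μx}·sinh(μx)/sinh²(μz)) dz = x − ((1 − e^{−2μx})/(2μ))·ln(1 − e^{2μx}). Here the integrand is nonnegative and integrable on [x, ∞), and it is the density f_{𝓜_x}(z) = μ·e^{−μx}·sinh(μx)/sinh²(μz) for z ≥ x of the maximum displacement. -/
open Real Set Filter MeasureTheory Topology

/-!
With `t = exp (2 μ z)` one has `sinh (μ z) ^ 2 = (1 - t) ^ 2 / (4 t)`, and `z / sinh (μ z) ^ 2`
has the elementary primitive `sinhSqMomentPrimitive μ`, which tends to `0` at `+∞` when `μ < 0`.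
As the integrand is nonnegative, the fundamental theorem of calculus on `[x, ∞)` gives both
integrability and the value `-c · sinhSqMomentPrimitive μ x`, where the constant factor of the
density is `c = μ (1 - exp (-2 μ x)) / 2`.
-/

namespace Real

theorem sinh_sq_eq_exp (t : ℝ) : sinh t ^ 2 = (1 - exp (2 * t)) ^ 2 / (4 * exp (2 * t)) := by
  have h : exp (2 * t) = exp t * exp t := by rw [← exp_add]; ring_nf
  rw [sinh_eq, exp_neg, h]
  field_simp
  ring

theorem exp_neg_mul_sinh (t : ℝ) : exp (-t) * sinh t = (1 - exp (-2 * t)) / 2 := by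
  rw [sinh_eq, mul_div_assoc', mul_sub, ← exp_add, ← exp_add]
  ring_nf
  simp

end Real

/-- Up to the additive constant `log 2 / μ ^ 2`, this is `-(z / μ) coth (μ z) + log |sinh (μ z)| / μ ^ 2`;
the exponential form is the one vanishing at `+∞` when `μ < 0`. -/
noncomputable def sinhSqMomentPrimitive (μ z : ℝ) : ℝ :=
  2 / μ * (z * exp (2 * μ * z) / (1 - exp (2 * μ * z))) + log (1 - exp (2 * μ * z)) / μ ^ 2

section

variable {μ x : ℝ}

theorem hasDerivAt_sinhSqMomentPrimitive {z : ℝ} (hμ : μ ≠ 0) (hz : z ≠ 0) :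
    HasDerivAt (sinhSqMomentPrimitive μ) (z / sinh (μ * z) ^ 2) z := by
  have hE : exp (2 * μ * z) ≠ 1 := by
    rw [Ne, exp_eq_one_iff]; positivity
  have hE' : 1 - exp (2 * μ * z) ≠ 0 := sub_ne_zero.mpr hE.symm
  have hexp : HasDerivAt (fun z => exp (2 * μ * z)) (2 * μ * exp (2 * μ * z)) z := by
    simpa [mul_comm] using ((hasDerivAt_id z).const_mul (2 * μ)).exp
  have hden : HasDerivAt (fun z => 1 - exp (2 * μ * z)) (-(2 * μ * exp (2 * μ * z))) z := by
    simpa using hexp.const_sub 1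
  have hnum := (hasDerivAt_id' z).mul hexp
  refine (((hnum.div hden hE').const_mul (2 / μ)).add
    ((hden.log hE').div_const (μ ^ 2))).congr_deriv ?_
  rw [sinh_sq_eq_exp, Pi.mul_apply]
  field_simp
  ring

theorem tendsto_sinhSqMomentPrimitive_atTop (hμ : μ < 0) :
    Tendsto (sinhSqMomentPrimitive μ) atTop (𝓝 0) := by
  have hexp : Tendsto (fun z => exp (2 * μ * z)) atTop (𝓝 0) :=
    tendsto_exp_atBot.comp (tendsto_id.const_mul_atTop_of_neg (by linarith))
  have hmul : Tendsto (fun z => z * exp (2 * μ * z)) atTop (𝓝 0) := by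
    refine (tendsto_rpow_mul_exp_neg_mul_atTop_nhds_zero 1 (-(2 * μ)) (by linarith)).congr
      fun z => ?_
    rw [rpow_one, neg_neg]
  have hden : Tendsto (fun z => 1 - exp (2 * μ * z)) atTop (𝓝 1) := by
    simpa using hexp.const_sub 1
  have hlog := (continuousAt_log one_ne_zero).tendsto.comp hden
  have h := ((hmul.div hden one_ne_zero).const_mul (2 / μ)).add (hlog.div_const (μ ^ 2))
  rwa [zero_div, mul_zero, log_one, zero_div, add_zero] at h

theorem integrableOn_Ioi_div_sinh_sq (hμ : μ < 0) (hx : 0 < x) :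
    IntegrableOn (fun z => z / sinh (μ * z) ^ 2) (Ioi x) :=
  integrableOn_Ioi_deriv_of_nonneg'
    (fun _ hz => hasDerivAt_sinhSqMomentPrimitive hμ.ne (hx.trans_le hz).ne')
    (fun _ hz => div_nonneg (hx.trans hz).le (sq_nonneg _))
    (tendsto_sinhSqMomentPrimitive_atTop hμ)

theorem integral_Ioi_div_sinh_sq (hμ : μ < 0) (hx : 0 < x) :
    ∫ z in Ioi x, z / sinh (μ * z) ^ 2 = -sinhSqMomentPrimitive μ x := by
  rw [integral_Ioi_of_hasDerivAt_of_nonneg'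
    (fun _ hz => hasDerivAt_sinhSqMomentPrimitive hμ.ne (hx.trans_le hz).ne')
    (fun _ hz => div_nonneg (hx.trans hz).le (sq_nonneg _))
    (tendsto_sinhSqMomentPrimitive_atTop hμ), zero_sub]

end

theorem stmt_19 (μ x : ℝ) (hμ : μ < 0) (hx : 0 < x) :
    (∀ z ∈ Set.Ici x,
      0 ≤ z * (μ * Real.exp (-μ*x) * Real.sinh (μ*x) / (Real.sinh (μ*z))^2))
    ∧ MeasureTheory.IntegrableOn
        (fun z => z * (μ * Real.exp (-μ*x) * Real.sinh (μ*x) / (Real.sinh (μ*z))^2))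
        (Set.Ici x)
    ∧ ∫ z in Set.Ici x,
        z * (μ * Real.exp (-μ*x) * Real.sinh (μ*x) / (Real.sinh (μ*z))^2)
      = x - ((1 - Real.exp (-2*μ*x)) / (2*μ)) * Real.log (1 - Real.exp (2*μ*x)) := by
  have hc : μ * exp (-μ * x) * sinh (μ * x) = μ * (1 - exp (-2 * μ * x)) / 2 := by
    rw [mul_assoc, neg_mul, exp_neg_mul_sinh, ← mul_assoc]; ring
  set c := μ * exp (-μ * x) * sinh (μ * x)
  have hc_nonneg : 0 ≤ c := by
    have : 1 ≤ exp (-2 * μ * x) := one_le_exp (by nlinarith)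
    rw [hc]
    exact div_nonneg (mul_nonneg_of_nonpos_of_nonpos hμ.le (by linarith)) zero_le_two
  have hf : (fun z => z * (c / sinh (μ * z) ^ 2)) = fun z => c * (z / sinh (μ * z) ^ 2) := by
    ext z; exact mul_div_left_comm _ _ _
  refine ⟨fun z hz => mul_nonneg (hx.le.trans hz) (div_nonneg hc_nonneg (sq_nonneg _)), ?_, ?_⟩
  · rw [hf, integrableOn_Ici_iff_integrableOn_Ioi]
    exact (integrableOn_Ioi_div_sinh_sq hμ hx).const_mul c
  · rw [hf, integral_Ici_eq_integral_Ioi, integral_const_mul, integral_Ioi_div_sinh_sq hμ hx, hc,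
      sinhSqMomentPrimitive, show -2 * μ * x = -(2 * μ * x) by ring, exp_neg]
    have hE0 : exp (2 * μ * x) ≠ 0 := (exp_pos _).ne'
    have hE1 : 1 - exp (2 * μ * x) ≠ 0 := by
      linarith [exp_lt_one_iff.mpr (show 2 * μ * x < 0 by nlinarith)]
    have hμ0 : μ ≠ 0 := hμ.ne
    generalize exp (2 * μ * x) = t at hE0 hE1 ⊢
    field_simp
    ring
end
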